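/- arXiv:2011.12003 — 3 statements merged into one kernel-verified Lean document; each statement's English description precedes it below -/
import Mathlib

section
/- Let n ≥ 3 and let m_1, …, m_n be nonnegative integers. Define λ_j := m_j + m_{j+1} + … + m_{n−2} + (m_{n−1} + m_n)/2 for 1 ≤ j ≤ n−2, λ_{n−1} := (m_{n−1} + m_n)/2, and λ_n := (m_n − m_{n−1})/2. Then there exists an injective affine map T : ℝ^{n(n−1)} → ℝ^{n²−2} whose image is the affine subspace V_λ, such that T maps the standard D_n string polytope Q_n(m) bijectively onto the tweaked Gelfand–Tsetlin polytope tGT(λ), and such that for every a ∈ Q_n(m): a ∈ ℤ^{n(n−1)} if and only if either all coordinates of T(a) together with λ_1, …, λ_n lie in ℤ, or all of them lie in ½ + ℤ. -/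
/-- Index set for the `y`-entries: pairs `(i, j)` with `2 ≤ i ≤ j ≤ n`. -/
abbrev DYIdx (n : ℕ) := {p : ℕ × ℕ // 2 ≤ p.1 ∧ p.1 ≤ p.2 ∧ p.2 ≤ n}

/-- Index set for the `z`-entries with `1 ≤ i ≤ j ≤ n − 2`. -/
abbrev DZIdx (n : ℕ) := {p : ℕ × ℕ // 1 ≤ p.1 ∧ p.1 ≤ p.2 ∧ p.2 ≤ n - 2}

/-- Index set for the `z↑`- and `z↓`-entries: `1 ≤ i ≤ n − 2`. -/
abbrev DUIdx (n : ℕ) := {i : ℕ // 1 ≤ i ∧ i ≤ n - 2}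

/-- The ambient space `ℝ^{n²−2}` of tweaked Gelfand–Tsetlin patterns: coordinates
`y_{i,j}` (for `2 ≤ i ≤ j ≤ n`), `z_{i,j}` (for `1 ≤ i ≤ j ≤ n−2`), `z↑_{i,n−1}` and
`z↓_{i,n−1}` (for `1 ≤ i ≤ n−2`), and `z_{n−1,n−1}`. -/
abbrev TPt (n : ℕ) := (DYIdx n → ℝ) × (DZIdx n → ℝ) × (DUIdx n → ℝ) × (DUIdx n → ℝ) × ℝ

/-- The `y_{i,j}` coordinate, with the convention `y_{1,j} = λ_j`
(`0` for out-of-range indices). -/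
def tY (n : ℕ) (lam : ℕ → ℝ) (w : TPt n) (i j : ℕ) : ℝ :=
  if i = 1 ∧ 1 ≤ j ∧ j ≤ n then lam j
  else if h : 2 ≤ i ∧ i ≤ j ∧ j ≤ n then w.1 ⟨(i, j), h⟩ else 0

/-- The `z_{i,j}` coordinate, `1 ≤ i ≤ j ≤ n−2` (`0` for out-of-range indices). -/
def tZ (n : ℕ) (w : TPt n) (i j : ℕ) : ℝ :=
  if h : 1 ≤ i ∧ i ≤ j ∧ j ≤ n - 2 then w.2.1 ⟨(i, j), h⟩ else 0

/-- The `z↑_{i,n−1}` coordinate (`0` for out-of-range indices). -/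
def tU (n : ℕ) (w : TPt n) (i : ℕ) : ℝ :=
  if h : 1 ≤ i ∧ i ≤ n - 2 then w.2.2.1 ⟨i, h⟩ else 0

/-- The `z↓_{i,n−1}` coordinate (`0` for out-of-range indices). -/
def tD (n : ℕ) (w : TPt n) (i : ℕ) : ℝ :=
  if h : 1 ≤ i ∧ i ≤ n - 2 then w.2.2.2.1 ⟨i, h⟩ else 0

/-- The `z_{n−1,n−1}` coordinate. -/
def tL (n : ℕ) (w : TPt n) : ℝ := w.2.2.2.2

/-- The affine subspace `V_λ ⊆ ℝ^{n²−2}` defined by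
`z↑_{i,n−1} − z↓_{i,n−1} = y_{i,n−1} − y_{i+1,n−1}` for `1 ≤ i ≤ n−2`. -/
def Vlam (n : ℕ) (lam : ℕ → ℝ) : Set (TPt n) :=
  {w | ∀ i, 1 ≤ i → i ≤ n - 2 →
    tU n w i - tD n w i = tY n lam w i (n - 1) - tY n lam w (i + 1) (n - 1)}

/-- The tweaked Gelfand–Tsetlin polytope `tGT(λ)` in type `Dₙ`. -/
def tGT (n : ℕ) (lam : ℕ → ℝ) : Set (TPt n) :=
  {w | w ∈ Vlam n lam ∧
    (∀ i j, 1 ≤ i → i ≤ n - 2 → i ≤ j → j ≤ n - 2 →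
      tY n lam w i j ≥ tZ n w i j ∧ tZ n w i j ≥ tY n lam w i (j + 1)) ∧
    (∀ i j, 1 ≤ i → i ≤ n - 2 → i + 1 ≤ j → j ≤ n - 2 →
      tZ n w i (j - 1) ≥ tY n lam w (i + 1) j ∧ tY n lam w (i + 1) j ≥ tZ n w i j) ∧
    (∀ i, 1 ≤ i → i ≤ n - 2 → tZ n w i (n - 2) ≥ tY n lam w (i + 1) (n - 1)) ∧
    (∀ i, 1 ≤ i → i ≤ n - 2 →
      tY n lam w i (n - 1) ≥ tU n w i ∧
      tU n w i ≥ max (tY n lam w i n) (tY n lam w (i + 1) n) ∧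
      tU n w i ≤ tY n lam w i (n - 1) + tY n lam w i n + tY n lam w (i + 1) n ∧
      tY n lam w (i + 1) (n - 1) ≥ tD n w i ∧
      tD n w i ≥ max (tY n lam w i n) (tY n lam w (i + 1) n) ∧
      tD n w i ≤ tY n lam w (i + 1) (n - 1) + tY n lam w i n + tY n lam w (i + 1) n) ∧
    (tY n lam w (n - 1) (n - 1) ≥ tL n w ∧
      tL n w ≥ max (tY n lam w (n - 1) n) (tY n lam w n n) ∧
      tL n w ≤ tY n lam w (n - 1) (n - 1) + tY n lam w (n - 1) n + tY n lam w n n)}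

/-- Index set for the standard `Dₙ` string polytope: pairs `(i, j)` with
`1 ≤ i ≤ n − 1` and `i ≤ j ≤ 2n − 1 − i`. -/
abbrev SIdx (n : ℕ) := {p : ℕ × ℕ // 1 ≤ p.1 ∧ p.1 ≤ p.2 ∧ p.2 ≤ 2 * n - 1 - p.1}

/-- The `a_{i,j}` coordinate of a point of `ℝ^{n(n−1)}`; coordinates with out-of-range
indices are `0`. -/
def aC (n : ℕ) (a : SIdx n → ℝ) (i j : ℕ) : ℝ :=
  if h : 1 ≤ i ∧ i ≤ j ∧ j ≤ 2 * n - 1 - i then a ⟨(i, j), h⟩ else 0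

/-- The barred coordinate `ā_{i,j} := a_{i,2n−1−j}`. -/
def aB (n : ℕ) (a : SIdx n → ℝ) (i j : ℕ) : ℝ := aC n a i (2 * n - 1 - j)

/-- The correction sum `Σ_{k=1}^{i−1} (a_{k,j−1} − 2a_{k,j} + a_{k,j+1} + ā_{k,j+1}
− 2ā_{k,j} + ā_{k,j−1})` appearing in the defining inequalities of the string polytope. -/
def sSum (n : ℕ) (a : SIdx n → ℝ) (i j : ℕ) : ℝ :=
  ∑ k ∈ Finset.Icc 1 (i - 1),
    (aC n a k (j - 1) - 2 * aC n a k j + aC n a k (j + 1)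
      + aB n a k (j + 1) - 2 * aB n a k j + aB n a k (j - 1))

/-- The standard `Dₙ` string polytope `Qₙ(m)` for nonnegative integers `m_1, …, m_n`. -/
def QPoly (n : ℕ) (m : ℕ → ℕ) : Set (SIdx n → ℝ) :=
  {a |
    (∀ i j, 1 ≤ i → i ≤ n - 2 → i ≤ j → j + 1 ≤ n - 2 → aC n a i j ≥ aC n a i (j + 1)) ∧
    (∀ i, 1 ≤ i → i ≤ n - 2 →
      aC n a i (n - 2) ≥ aC n a i (n - 1) ∧
      aC n a i (n - 2) ≥ aB n a i (n - 1) ∧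
      aC n a i (n - 1) ≥ aB n a i (n - 2) ∧
      aB n a i (n - 1) ≥ aB n a i (n - 2) ∧
      aB n a i i ≥ 0) ∧
    (∀ i j, 1 ≤ i → i ≤ n - 2 → i + 1 ≤ j → j ≤ n - 2 → aB n a i j ≥ aB n a i (j - 1)) ∧
    aC n a (n - 1) (n - 1) ≥ 0 ∧ aB n a (n - 1) (n - 1) ≥ 0 ∧
    (∀ i j, 1 ≤ i → i ≤ n - 1 → i ≤ j → j ≤ n - 2 →
      aC n a i j ≤ (m j : ℝ) + aC n a i (j + 1) + aB n a i (j + 1) - 2 * aB n a i j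
        + aB n a i (j - 1) + sSum n a i j ∧
      aB n a i j ≤ (m j : ℝ) + aB n a i (j - 1) + sSum n a i j) ∧
    (∀ i, 1 ≤ i → i ≤ n - 1 →
      aC n a i (n - 1) ≤ (m (n - 1) : ℝ) + aB n a i (n - 2) +
        ∑ k ∈ Finset.Icc 1 (i - 1),
          (aC n a k (n - 2) - 2 * aC n a k (n - 1) + aB n a k (n - 2)) ∧
      aB n a i (n - 1) ≤ (m n : ℝ) + aB n a i (n - 2) +
        ∑ k ∈ Finset.Icc 1 (i - 1),
          (aC n a k (n - 2) - 2 * aB n a k (n - 1) + aB n a k (n - 2)))}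


namespace St12

open Finset

/-! ### Sum helpers -/

lemma sum_split {s : Finset ℕ} (F G H : ℕ → ℝ) (h : ∀ k ∈ s, F k = G k + H k) :
    ∑ k ∈ s, F k = (∑ k ∈ s, G k) + ∑ k ∈ s, H k := by
  rw [← Finset.sum_add_distrib]; exact Finset.sum_congr rfl h

lemma sum_fact {s : Finset ℕ} (c : ℝ) (F G : ℕ → ℝ) (h : ∀ k ∈ s, F k = c * G k) :
    ∑ k ∈ s, F k = c * ∑ k ∈ s, G k := by
  rw [Finset.mul_sum]; exact Finset.sum_congr rfl h

lemma sum_Icc_top {a b : ℕ} (h1 : 1 ≤ b) (h : a ≤ b) (f : ℕ → ℝ) :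
    ∑ k ∈ Icc a b, f k = (∑ k ∈ Icc a (b - 1), f k) + f b := by
  obtain ⟨c, rfl⟩ : ∃ c, b = c + 1 := ⟨b - 1, by omega⟩
  rw [Finset.sum_Icc_succ_top (by omega), Nat.add_sub_cancel]

lemma sum_Icc_bot {a b : ℕ} (h : a ≤ b) (f : ℕ → ℝ) :
    ∑ k ∈ Icc a b, f k = f a + ∑ k ∈ Icc (a + 1) b, f k := by
  induction b with
  | zero =>
    have ha : a = 0 := by omega
    subst ha
    rw [Finset.Icc_self, Finset.sum_singleton, Finset.Icc_eq_empty (by omega),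
      Finset.sum_empty, add_zero]
  | succ b ih =>
    rcases Nat.lt_or_ge a (b + 1) with h' | h'
    · rw [Finset.sum_Icc_succ_top (by omega), Finset.sum_Icc_succ_top (by omega), ih (by omega)]
      ring
    · have ha : a = b + 1 := by omega
      subst ha
      rw [Finset.Icc_self, Finset.sum_singleton, Finset.Icc_eq_empty (by omega),
        Finset.sum_empty, add_zero]

lemma tele_dn (f : ℕ → ℝ) {a b : ℕ} (h1 : 1 ≤ a) (h : a ≤ b + 1) :
    ∑ t ∈ Icc a b, (f t - f (t - 1)) = f b - f (a - 1) := by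
  induction b with
  | zero =>
    have ha : a = 1 := by omega
    subst ha
    rw [Finset.Icc_eq_empty (by omega), Finset.sum_empty]
    norm_num
  | succ b ih =>
    rcases Nat.lt_or_ge a (b + 2) with h' | h'
    · rw [Finset.sum_Icc_succ_top (by omega), ih (by omega), Nat.add_sub_cancel]
      ring
    · have ha : a = b + 2 := by omega
      subst ha
      rw [Finset.Icc_eq_empty (by omega), Finset.sum_empty,
        show b + 2 - 1 = b + 1 by omega]
      ring

lemma tele_dn' (f : ℕ → ℝ) {a b : ℕ} (h1 : 1 ≤ a) (h : a ≤ b + 1) :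
    ∑ t ∈ Icc a b, (f (t - 1) - f t) = f (a - 1) - f b := by
  have e : ∀ t ∈ Icc a b, f (t - 1) - f t = -(f t - f (t - 1)) := fun t _ => by ring
  rw [Finset.sum_congr rfl e, Finset.sum_neg_distrib, tele_dn f h1 h]
  ring

lemma tele_up (f : ℕ → ℝ) {a b : ℕ} (h : a ≤ b + 1) :
    ∑ t ∈ Icc a b, (f (t + 1) - f t) = f (b + 1) - f a := by
  induction b with
  | zero =>
    rcases Nat.lt_or_ge a 1 with h' | h'
    · have ha : a = 0 := by omega
      subst ha
      rw [Finset.Icc_self, Finset.sum_singleton]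
    · have ha : a = 1 := by omega
      subst ha
      rw [Finset.Icc_eq_empty (by omega), Finset.sum_empty]
      ring
  | succ b ih =>
    rcases Nat.lt_or_ge a (b + 2) with h' | h'
    · rw [Finset.sum_Icc_succ_top (by omega), ih (by omega)]
      ring
    · have ha : a = b + 2 := by omega
      subst ha
      rw [Finset.Icc_eq_empty (by omega), Finset.sum_empty]
      ring

/-! ### Coordinate lemmas -/

lemma aC_def (n : ℕ) (a : SIdx n → ℝ) {i j : ℕ} (h : 1 ≤ i ∧ i ≤ j ∧ j ≤ 2 * n - 1 - i) :
    aC n a i j = a ⟨(i, j), h⟩ := dif_pos h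

lemma aC_oor (n : ℕ) (a : SIdx n → ℝ) {i j : ℕ} (h : ¬(1 ≤ i ∧ i ≤ j ∧ j ≤ 2 * n - 1 - i)) :
    aC n a i j = 0 := dif_neg h

lemma aB_def (n : ℕ) (a : SIdx n → ℝ) (i j : ℕ) : aB n a i j = aC n a i (2 * n - 1 - j) := rfl

lemma aC_add (n : ℕ) (x y : SIdx n → ℝ) (i j : ℕ) :
    aC n (x + y) i j = aC n x i j + aC n y i j := by
  unfold aC
  split
  · rfl
  · norm_num

lemma aB_add (n : ℕ) (x y : SIdx n → ℝ) (i j : ℕ) :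
    aB n (x + y) i j = aB n x i j + aB n y i j := aC_add n x y i _

lemma aC_smul (n : ℕ) (c : ℝ) (x : SIdx n → ℝ) (i j : ℕ) :
    aC n (c • x) i j = c * aC n x i j := by
  unfold aC
  split
  · rfl
  · norm_num

lemma aB_smul (n : ℕ) (c : ℝ) (x : SIdx n → ℝ) (i j : ℕ) :
    aB n (c • x) i j = c * aB n x i j := aC_smul n c x i _

lemma aC_zero (n : ℕ) (i j : ℕ) : aC n (0 : SIdx n → ℝ) i j = 0 := by
  unfold aC
  split <;> rfl

lemma aB_zero (n : ℕ) (i j : ℕ) : aB n (0 : SIdx n → ℝ) i j = 0 := aC_zero n i _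

lemma aB_pred (n : ℕ) (a : SIdx n → ℝ) {i : ℕ} (hi : 1 ≤ i) (hin : i ≤ n - 1) :
    aB n a i (i - 1) = 0 := by
  rw [aB_def]
  exact aC_oor n a (by omega)

lemma aB_last (n : ℕ) (a : SIdx n → ℝ) (hn : 3 ≤ n) : aB n a (n - 1) (n - 2) = 0 := by
  rw [aB_def]
  exact aC_oor n a (by omega)

/-! ### The map `Tf` -/

/-- constant part of `y_{i,j}`. -/
def cLam (n : ℕ) (lam : ℕ → ℝ) (i j : ℕ) : ℝ :=
  if j = n then (if i = n then lam (n - 1) else lam n) else lam j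

/-- linear part of `y_{i,j}`. -/
def sY (n : ℕ) (a : SIdx n → ℝ) (i j : ℕ) : ℝ :=
  if j = n then
    if i = n then
      (∑ k ∈ Icc 1 (n - 2),
        (aC n a k (n - 2) - aC n a k (n - 1) + aB n a k (n - 2) - aB n a k (n - 1)))
        - aC n a (n - 1) (n - 1) - aB n a (n - 1) (n - 1)
    else ∑ k ∈ Icc 1 (i - 1), (aC n a k (n - 1) - aB n a k (n - 1))
  else ∑ k ∈ Icc 1 (i - 1), (aC n a k (j - 1) - aC n a k j + aB n a k (j - 1) - aB n a k j)

def fY (n : ℕ) (lam : ℕ → ℝ) (a : SIdx n → ℝ) (i j : ℕ) : ℝ := cLam n lam i j + sY n a i j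

def fZ (n : ℕ) (lam : ℕ → ℝ) (a : SIdx n → ℝ) (i j : ℕ) : ℝ :=
  fY n lam a i j - aB n a i j + aB n a i (j - 1)

def fU (n : ℕ) (lam : ℕ → ℝ) (a : SIdx n → ℝ) (i : ℕ) : ℝ :=
  fY n lam a i n + aC n a i (n - 1) - aB n a i (n - 2)

def fD (n : ℕ) (lam : ℕ → ℝ) (a : SIdx n → ℝ) (i : ℕ) : ℝ :=
  fY n lam a (i + 1) n + aC n a i (n - 2) - aC n a i (n - 1)

def fL (n : ℕ) (lam : ℕ → ℝ) (a : SIdx n → ℝ) : ℝ :=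
  fY n lam a (n - 1) (n - 1) - aC n a (n - 1) (n - 1)

def Tf (n : ℕ) (lam : ℕ → ℝ) (a : SIdx n → ℝ) : TPt n :=
  (fun p => fY n lam a p.1.1 p.1.2, fun p => fZ n lam a p.1.1 p.1.2,
   fun p => fU n lam a p.1, fun p => fD n lam a p.1, fL n lam a)

/-! ### Linearity -/

lemma cLam_zero (n : ℕ) (i j : ℕ) : cLam n (fun _ => (0 : ℝ)) i j = 0 := by
  unfold cLam
  split_ifs <;> rfl

lemma sY_zero (n : ℕ) (i j : ℕ) : sY n (0 : SIdx n → ℝ) i j = 0 := by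
  unfold sY
  split_ifs <;> simp [aC_zero, aB_zero]

lemma sY_add (n : ℕ) (x y : SIdx n → ℝ) (i j : ℕ) :
    sY n (x + y) i j = sY n x i j + sY n y i j := by
  unfold sY
  split_ifs with h1 h2
  · simp only [aC_add, aB_add]
    rw [sum_split _
      (fun k => aC n x k (n - 2) - aC n x k (n - 1) + aB n x k (n - 2) - aB n x k (n - 1))
      (fun k => aC n y k (n - 2) - aC n y k (n - 1) + aB n y k (n - 2) - aB n y k (n - 1))
      (fun k _ => by ring)]
    ring
  · simp only [aC_add, aB_add]
    rw [sum_split _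
      (fun k => aC n x k (n - 1) - aB n x k (n - 1))
      (fun k => aC n y k (n - 1) - aB n y k (n - 1))
      (fun k _ => by ring)]
  · simp only [aC_add, aB_add]
    rw [sum_split _
      (fun k => aC n x k (j - 1) - aC n x k j + aB n x k (j - 1) - aB n x k j)
      (fun k => aC n y k (j - 1) - aC n y k j + aB n y k (j - 1) - aB n y k j)
      (fun k _ => by ring)]

lemma sY_smul (n : ℕ) (c : ℝ) (x : SIdx n → ℝ) (i j : ℕ) :
    sY n (c • x) i j = c * sY n x i j := by
  unfold sY
  split_ifs with h1 h2
  · simp only [aC_smul, aB_smul]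
    rw [sum_fact c _
      (fun k => aC n x k (n - 2) - aC n x k (n - 1) + aB n x k (n - 2) - aB n x k (n - 1))
      (fun k _ => by ring)]
    ring
  · simp only [aC_smul, aB_smul]
    rw [sum_fact c _
      (fun k => aC n x k (n - 1) - aB n x k (n - 1))
      (fun k _ => by ring)]
  · simp only [aC_smul, aB_smul]
    rw [sum_fact c _
      (fun k => aC n x k (j - 1) - aC n x k j + aB n x k (j - 1) - aB n x k j)
      (fun k _ => by ring)]

/-- The linear part of the affine map. -/
noncomputable def Lf (n : ℕ) : (SIdx n → ℝ) →ₗ[ℝ] TPt n where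
  toFun := Tf n (fun _ => 0)
  map_add' x y := by
    unfold Tf
    refine Prod.ext (funext fun p => ?_) (Prod.ext (funext fun p => ?_)
      (Prod.ext (funext fun p => ?_) (Prod.ext (funext fun p => ?_) ?_))) <;>
    simp only [Prod.fst_add, Prod.snd_add, Pi.add_apply, fY, fZ, fU, fD, fL, cLam_zero,
      sY_add, aC_add, aB_add] <;> ring
  map_smul' c x := by
    unfold Tf
    refine Prod.ext (funext fun p => ?_) (Prod.ext (funext fun p => ?_)
      (Prod.ext (funext fun p => ?_) (Prod.ext (funext fun p => ?_) ?_))) <;>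
    simp only [Prod.smul_fst, Prod.smul_snd, Pi.smul_apply, fY, fZ, fU, fD, fL, cLam_zero,
      sY_smul, aC_smul, aB_smul, RingHom.id_apply, smul_eq_mul] <;> ring

lemma Tf_decomp (n : ℕ) (lam : ℕ → ℝ) (a : SIdx n → ℝ) :
    Tf n lam a = Lf n (a -ᵥ 0) +ᵥ Tf n lam 0 := by
  rw [vsub_eq_sub, sub_zero, vadd_eq_add]
  show Tf n lam a = Tf n (fun _ => 0) a + Tf n lam 0
  unfold Tf
  refine Prod.ext (funext fun p => ?_) (Prod.ext (funext fun p => ?_)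
    (Prod.ext (funext fun p => ?_) (Prod.ext (funext fun p => ?_) ?_))) <;>
  simp only [Prod.fst_add, Prod.snd_add, Pi.add_apply, fY, fZ, fU, fD, fL, cLam_zero,
    sY_zero, aC_zero, aB_zero] <;> ring

/-- The affine map `T`. -/
noncomputable def Tmap (n : ℕ) (lam : ℕ → ℝ) : (SIdx n → ℝ) →ᵃ[ℝ] TPt n :=
  AffineMap.mk' (Tf n lam) (Lf n) 0 (Tf_decomp n lam)

lemma Tmap_apply (n : ℕ) (lam : ℕ → ℝ) (a : SIdx n → ℝ) : Tmap n lam a = Tf n lam a := by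
  rw [Tmap, AffineMap.coe_mk']


/-! ### Branch lemmas for `fY` -/

section Identities

variable {n : ℕ} (lam : ℕ → ℝ) (a : SIdx n → ℝ)

lemma fY_lt {j : ℕ} (i : ℕ) (hj : j ≠ n) :
    fY n lam a i j = lam j + ∑ k ∈ Icc 1 (i - 1),
      (aC n a k (j - 1) - aC n a k j + aB n a k (j - 1) - aB n a k j) := by
  unfold fY cLam sY
  rw [if_neg hj, if_neg hj]

lemma fY_n {i : ℕ} (hi : i ≠ n) :
    fY n lam a i n = lam n + ∑ k ∈ Icc 1 (i - 1), (aC n a k (n - 1) - aB n a k (n - 1)) := by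
  unfold fY cLam sY
  rw [if_pos rfl, if_pos rfl, if_neg hi, if_neg hi]

lemma fY_nn (hn : 3 ≤ n) :
    fY n lam a n n = fY n lam a (n - 1) (n - 1) - aC n a (n - 1) (n - 1)
      - aB n a (n - 1) (n - 1) := by
  unfold fY cLam sY
  rw [if_pos rfl, if_pos rfl, if_pos rfl, if_pos rfl, if_neg (by omega : ¬(n - 1 = n)),
    if_neg (by omega : ¬(n - 1 = n)), show n - 1 - 1 = n - 2 by omega]
  ring

lemma fY_succ {i j : ℕ} (hi : 1 ≤ i) (hj : j ≠ n) :
    fY n lam a (i + 1) j = fY n lam a i j +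
      (aC n a i (j - 1) - aC n a i j + aB n a i (j - 1) - aB n a i j) := by
  rw [fY_lt lam a (i + 1) hj, fY_lt lam a i hj, Nat.add_sub_cancel,
    sum_Icc_top hi hi]
  ring

lemma fY_succ_n {i : ℕ} (hi : 1 ≤ i) (hi2 : i + 1 ≠ n) (hi3 : i ≠ n) :
    fY n lam a (i + 1) n = fY n lam a i n + (aC n a i (n - 1) - aB n a i (n - 1)) := by
  rw [fY_n lam a hi2, fY_n lam a hi3, Nat.add_sub_cancel, sum_Icc_top hi hi]
  ring

variable (m : ℕ → ℕ)

/-- the two extra sums in the statement. -/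
def sS1 (i : ℕ) : ℝ :=
  ∑ k ∈ Finset.Icc 1 (i - 1), (aC n a k (n - 2) - 2 * aC n a k (n - 1) + aB n a k (n - 2))

def sS2 (i : ℕ) : ℝ :=
  ∑ k ∈ Finset.Icc 1 (i - 1), (aC n a k (n - 2) - 2 * aB n a k (n - 1) + aB n a k (n - 2))

variable (hn : 3 ≤ n)
variable (hlam1 : ∀ j, 1 ≤ j → j ≤ n - 2 →
      lam j = (∑ t ∈ Finset.Icc j (n - 2), (m t : ℝ)) + ((m (n - 1) : ℝ) + (m n : ℝ)) / 2)
variable (hlam2 : lam (n - 1) = ((m (n - 1) : ℝ) + (m n : ℝ)) / 2)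
variable (hlam3 : lam n = ((m n : ℝ) - (m (n - 1) : ℝ)) / 2)

include hn hlam1 hlam2 in
lemma lam_step {j : ℕ} (hj1 : 1 ≤ j) (hj2 : j ≤ n - 2) : lam j = (m j : ℝ) + lam (j + 1) := by
  by_cases h : j + 1 ≤ n - 2
  · rw [hlam1 j hj1 hj2, hlam1 (j + 1) (by omega) h, sum_Icc_bot hj2]
    ring
  · have hj : j = n - 2 := by omega
    subst hj
    rw [show n - 2 + 1 = n - 1 by omega, hlam1 (n - 2) (by omega) le_rfl, hlam2,
      Finset.Icc_self, Finset.sum_singleton]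

include hlam2 hlam3 in
lemma lam_n : lam (n - 1) = (m (n - 1) : ℝ) + lam n := by rw [hlam2, hlam3]; ring

include hlam2 hlam3 in
lemma lam_nn : lam (n - 1) + lam n = (m n : ℝ) := by rw [hlam2, hlam3]; ring

include hn hlam1 hlam2 in
lemma fY_step {i j : ℕ} (hj1 : 1 ≤ j) (hj2 : j ≤ n - 2) :
    fY n lam a i j = (m j : ℝ) + sSum n a i j + fY n lam a i (j + 1) := by
  rw [fY_lt lam a i (by omega), fY_lt lam a i (by omega : j + 1 ≠ n), sSum,
    Nat.add_sub_cancel]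
  rw [sum_split _
    (fun k => aC n a k (j - 1) - 2 * aC n a k j + aC n a k (j + 1) + aB n a k (j + 1)
      - 2 * aB n a k j + aB n a k (j - 1))
    (fun k => aC n a k j - aC n a k (j + 1) + aB n a k j - aB n a k (j + 1))
    (fun k _ => by ring), lam_step lam m hn hlam1 hlam2 hj1 hj2]
  ring

include hn hlam2 hlam3 in
lemma fY_step_n1 {i : ℕ} (hi : i ≠ n) :
    fY n lam a i (n - 1) = (m (n - 1) : ℝ) + sS1 a i + fY n lam a i n := by
  rw [fY_lt lam a i (by omega), fY_n lam a hi, sS1, show n - 1 - 1 = n - 2 by omega]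
  rw [sum_split _
    (fun k => aC n a k (n - 2) - 2 * aC n a k (n - 1) + aB n a k (n - 2))
    (fun k => aC n a k (n - 1) - aB n a k (n - 1))
    (fun k _ => by ring), lam_n lam m hlam2 hlam3]
  ring

include hn hlam2 hlam3 in
lemma fY_sum_n1 {i : ℕ} (hi : i ≠ n) :
    fY n lam a i (n - 1) + fY n lam a i n = (m n : ℝ) + sS2 a i := by
  rw [fY_lt lam a i (by omega), fY_n lam a hi, sS2, show n - 1 - 1 = n - 2 by omega]
  rw [sum_split _
    (fun k => aC n a k (n - 2) - 2 * aB n a k (n - 1) + aB n a k (n - 2))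
    (fun k => aB n a k (n - 1) - aC n a k (n - 1))
    (fun k _ => by ring)]
  have h0 : ∑ k ∈ Icc 1 (i - 1), (aB n a k (n - 1) - aC n a k (n - 1))
      = - ∑ k ∈ Icc 1 (i - 1), (aC n a k (n - 1) - aB n a k (n - 1)) := by
    rw [← Finset.sum_neg_distrib]
    exact Finset.sum_congr rfl fun k _ => by ring
  have := lam_nn lam m hlam2 hlam3
  linarith

/-! ### Facet identities -/

lemma E1 {i j : ℕ} (hi : 1 ≤ i) (hj : j + 1 ≠ n) :
    fY n lam a (i + 1) (j + 1) - fZ n lam a i (j + 1) = aC n a i j - aC n a i (j + 1) := by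
  rw [fY_succ lam a hi hj]
  simp only [fZ, Nat.add_sub_cancel]
  ring

lemma E2a {i : ℕ} :
    fD n lam a i - fY n lam a (i + 1) n = aC n a i (n - 2) - aC n a i (n - 1) := by
  simp only [fD]; ring

lemma E2b {i : ℕ} (hi : 1 ≤ i) (hi2 : i + 1 ≤ n - 1) :
    fD n lam a i - fY n lam a i n = aC n a i (n - 2) - aB n a i (n - 1) := by
  simp only [fD]
  rw [fY_succ_n lam a hi (by omega) (by omega)]
  ring

lemma E2c {i : ℕ} :
    fU n lam a i - fY n lam a i n = aC n a i (n - 1) - aB n a i (n - 2) := by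
  simp only [fU]; ring

lemma E2d {i : ℕ} (hi : 1 ≤ i) (hi2 : i + 1 ≤ n - 1) :
    fU n lam a i - fY n lam a (i + 1) n = aB n a i (n - 1) - aB n a i (n - 2) := by
  simp only [fU]
  rw [fY_succ_n lam a hi (by omega) (by omega)]
  ring

lemma E3 {i j : ℕ} :
    fY n lam a i j - fZ n lam a i j = aB n a i j - aB n a i (j - 1) := by
  simp only [fZ]; ring

include hn in
lemma EV {i : ℕ} (hi : 1 ≤ i) (hi2 : i ≤ n - 2) :
    fU n lam a i - fD n lam a i = fY n lam a i (n - 1) - fY n lam a (i + 1) (n - 1) := by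
  simp only [fU, fD]
  rw [fY_succ lam a hi (by omega : n - 1 ≠ n), fY_succ_n lam a hi (by omega) (by omega),
    show n - 1 - 1 = n - 2 by omega]
  ring

include hn hlam1 hlam2 in
lemma E5a {i j : ℕ} (hi : 1 ≤ i) (hj1 : 1 ≤ j) (hj2 : j ≤ n - 2) :
    fZ n lam a i j - fY n lam a (i + 1) (j + 1) =
      (m j : ℝ) + aC n a i (j + 1) + aB n a i (j + 1) - 2 * aB n a i j + aB n a i (j - 1)
        + sSum n a i j - aC n a i j := by
  simp only [fZ]
  rw [fY_step lam a m hn hlam1 hlam2 hj1 hj2, fY_succ lam a hi (by omega : j + 1 ≠ n),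
    Nat.add_sub_cancel]
  ring

include hn hlam1 hlam2 in
lemma E5b {i j : ℕ} (hj1 : 1 ≤ j) (hj2 : j ≤ n - 2) :
    fZ n lam a i j - fY n lam a i (j + 1) =
      (m j : ℝ) + aB n a i (j - 1) + sSum n a i j - aB n a i j := by
  simp only [fZ]
  rw [fY_step lam a m hn hlam1 hlam2 hj1 hj2]
  ring

include hn hlam2 hlam3 in
lemma E6a {i : ℕ} (hi : i ≠ n) :
    fY n lam a i (n - 1) - fU n lam a i =
      (m (n - 1) : ℝ) + aB n a i (n - 2) + sS1 a i - aC n a i (n - 1) := by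
  simp only [fU]
  rw [fY_step_n1 lam a m hn hlam2 hlam3 hi]
  ring

include hn hlam2 hlam3 in
lemma E6b {i : ℕ} (hi : 1 ≤ i) (hi2 : i + 1 ≤ n - 1) :
    fY n lam a i (n - 1) + fY n lam a i n + fY n lam a (i + 1) n - fU n lam a i =
      (m n : ℝ) + aB n a i (n - 2) + sS2 a i - aB n a i (n - 1) := by
  simp only [fU]
  rw [fY_succ_n lam a hi (by omega) (by omega)]
  have := fY_sum_n1 lam a m hn hlam2 hlam3 (show i ≠ n by omega)
  linarith

lemma E4a : fY n lam a (n - 1) (n - 1) - fL n lam a = aC n a (n - 1) (n - 1) := by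
  simp only [fL]; ring

include hn in
lemma E4b : fL n lam a - fY n lam a n n = aB n a (n - 1) (n - 1) := by
  rw [fY_nn lam a hn]
  simp only [fL]
  ring

include hn hlam2 hlam3 in
lemma E6a' : fL n lam a - fY n lam a (n - 1) n =
    (m (n - 1) : ℝ) + sS1 a (n - 1) - aC n a (n - 1) (n - 1) := by
  simp only [fL]
  rw [fY_step_n1 lam a m hn hlam2 hlam3 (show n - 1 ≠ n by omega)]
  ring

include hn hlam2 hlam3 in
lemma E6b' : fY n lam a (n - 1) (n - 1) + fY n lam a (n - 1) n + fY n lam a n n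
      - fL n lam a =
    (m n : ℝ) + sS2 a (n - 1) - aB n a (n - 1) (n - 1) := by
  rw [fY_nn lam a hn]
  simp only [fL]
  have := fY_sum_n1 lam a m hn hlam2 hlam3 (show n - 1 ≠ n by omega)
  linarith

end Identities

/-! ### Evaluating `tY` etc. on `Tf` -/

section TfEval

variable {n : ℕ} (lam : ℕ → ℝ) (a : SIdx n → ℝ)

lemma tY_one {j : ℕ} (w : TPt n) (h1 : 1 ≤ j) (h2 : j ≤ n) : tY n lam w 1 j = lam j := by
  unfold tY
  rw [if_pos ⟨rfl, h1, h2⟩]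

lemma tY_ge2 {i j : ℕ} (w : TPt n) (h : 2 ≤ i ∧ i ≤ j ∧ j ≤ n) :
    tY n lam w i j = w.1 ⟨(i, j), h⟩ := by
  unfold tY
  rw [if_neg (fun hc => by omega), dif_pos h]

lemma tY_Tf (hn : 3 ≤ n) {i j : ℕ} (hi : 1 ≤ i) (hij : i ≤ j) (hj : j ≤ n) :
    tY n lam (Tf n lam a) i j = fY n lam a i j := by
  by_cases h1 : i = 1
  · subst h1
    rw [tY_one lam _ (by omega) hj]
    by_cases hjn : j = n
    · subst hjn
      rw [fY_n lam a (by omega), show (1 : ℕ) - 1 = 0 from rfl,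
        Finset.Icc_eq_empty (by omega), Finset.sum_empty, add_zero]
    · rw [fY_lt lam a 1 hjn, show (1 : ℕ) - 1 = 0 from rfl,
        Finset.Icc_eq_empty (by omega), Finset.sum_empty, add_zero]
  · rw [tY_ge2 lam _ ⟨by omega, hij, hj⟩]
    rfl

lemma tZ_Tf {i j : ℕ} (h : 1 ≤ i ∧ i ≤ j ∧ j ≤ n - 2) :
    tZ n (Tf n lam a) i j = fZ n lam a i j := by
  unfold tZ
  rw [dif_pos h]
  rfl

lemma tU_Tf {i : ℕ} (h : 1 ≤ i ∧ i ≤ n - 2) :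
    tU n (Tf n lam a) i = fU n lam a i := by
  unfold tU
  rw [dif_pos h]
  rfl

lemma tD_Tf {i : ℕ} (h : 1 ≤ i ∧ i ≤ n - 2) :
    tD n (Tf n lam a) i = fD n lam a i := by
  unfold tD
  rw [dif_pos h]
  rfl

lemma tL_Tf : tL n (Tf n lam a) = fL n lam a := rfl

lemma Tf_mem_V (hn : 3 ≤ n) : Tf n lam a ∈ Vlam n lam := by
  intro i hi1 hi2
  rw [tU_Tf lam a ⟨hi1, hi2⟩, tD_Tf lam a ⟨hi1, hi2⟩,
    tY_Tf lam a hn hi1 (by omega) (by omega), tY_Tf lam a hn (by omega) (by omega) (by omega)]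
  exact EV lam a hn hi1 hi2

end TfEval


/-! ### The inverse map -/

def gB (n : ℕ) (lam : ℕ → ℝ) (w : TPt n) (i j : ℕ) : ℝ :=
  if i = n - 1 then tL n w - tY n lam w n n
  else if j = n - 1 then
    (∑ t ∈ Icc i (n - 2), (tY n lam w i t - tZ n w i t)) + tU n w i - tY n lam w (i + 1) n
  else ∑ t ∈ Icc i j, (tY n lam w i t - tZ n w i t)

def gC (n : ℕ) (lam : ℕ → ℝ) (w : TPt n) (i j : ℕ) : ℝ :=
  if i = n - 1 then tY n lam w (n - 1) (n - 1) - tL n w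
  else if j = n - 1 then
    tU n w i - tY n lam w i n + ∑ t ∈ Icc i (n - 2), (tY n lam w i t - tZ n w i t)
  else
    (tU n w i - tY n lam w i n + ∑ t ∈ Icc i (n - 2), (tY n lam w i t - tZ n w i t))
      + (tD n w i - tY n lam w (i + 1) n)
      + ∑ t ∈ Icc (j + 1) (n - 2), (tY n lam w (i + 1) t - tZ n w i t)

def Sf (n : ℕ) (lam : ℕ → ℝ) (w : TPt n) : SIdx n → ℝ :=
  fun p =>
    if p.1.2 ≤ n - 1 then gC n lam w p.1.1 p.1.2 else gB n lam w p.1.1 (2 * n - 1 - p.1.2)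

section Inverse

variable {n : ℕ} (lam : ℕ → ℝ) (a : SIdx n → ℝ)

lemma sumYZ (hn : 3 ≤ n) {i j : ℕ} (hi1 : 1 ≤ i) (hi2 : i ≤ n - 2) (hj : j ≤ n - 2) :
    ∑ t ∈ Icc i j, (tY n lam (Tf n lam a) i t - tZ n (Tf n lam a) i t) = aB n a i j := by
  rcases Nat.lt_or_ge j i with h | h
  · rw [Finset.Icc_eq_empty (by omega), Finset.sum_empty, aB_def, aC_oor n a (by omega)]
  · have hc : ∀ t ∈ Icc i j, tY n lam (Tf n lam a) i t - tZ n (Tf n lam a) i t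
        = aB n a i t - aB n a i (t - 1) := by
      intro t ht
      rw [Finset.mem_Icc] at ht
      rw [tY_Tf lam a hn hi1 ht.1 (by omega), tZ_Tf lam a ⟨hi1, ht.1, by omega⟩]
      exact E3 lam a
    rw [Finset.sum_congr rfl hc, tele_dn _ (by omega) (by omega),
      aB_pred n a hi1 (by omega), sub_zero]

lemma ST (hn : 3 ≤ n) : Sf n lam (Tf n lam a) = a := by
  funext p
  obtain ⟨⟨i, j⟩, hp⟩ := p
  have h1 : 1 ≤ i := hp.1
  have hij : i ≤ j := hp.2.1
  have hj2 : j ≤ 2 * n - 1 - i := hp.2.2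
  simp only [Sf]
  rw [← aC_def n a hp]
  by_cases hi : i = n - 1
  · subst hi
    rcases (by omega : j = n - 1 ∨ j = n) with hj | hj
    · subst hj
      rw [if_pos (le_refl (n - 1))]
      unfold gC
      rw [if_pos rfl, tY_Tf lam a hn (by omega) le_rfl (by omega), tL_Tf]
      exact E4a lam a
    · replace hj := hj.symm
      subst hj
      rw [if_neg (by omega : ¬(n ≤ n - 1)), show 2 * n - 1 - n = n - 1 by omega]
      unfold gB
      rw [if_pos rfl, tL_Tf, tY_Tf lam a hn (by omega) le_rfl le_rfl]
      have h := E4b lam a hn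
      rw [aB_def, show 2 * n - 1 - (n - 1) = n by omega] at h
      exact h
  · have hi2 : i ≤ n - 2 := by omega
    by_cases hjc : j ≤ n - 1
    · rw [if_pos hjc]
      unfold gC
      rw [if_neg hi]
      by_cases hj1 : j = n - 1
      · subst hj1
        rw [if_pos rfl, sumYZ lam a hn h1 hi2 le_rfl, tU_Tf lam a ⟨h1, hi2⟩,
          tY_Tf lam a hn h1 (by omega) le_rfl]
        have h := E2c lam a (i := i)
        linarith
      · rw [if_neg hj1, sumYZ lam a hn h1 hi2 le_rfl, tU_Tf lam a ⟨h1, hi2⟩,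
          tD_Tf lam a ⟨h1, hi2⟩, tY_Tf lam a hn h1 (by omega) le_rfl,
          tY_Tf lam a hn (by omega) (by omega) le_rfl]
        have hsum : ∑ t ∈ Icc (j + 1) (n - 2),
            (tY n lam (Tf n lam a) (i + 1) t - tZ n (Tf n lam a) i t)
            = aC n a i j - aC n a i (n - 2) := by
          have hc : ∀ t ∈ Icc (j + 1) (n - 2),
              tY n lam (Tf n lam a) (i + 1) t - tZ n (Tf n lam a) i t
              = aC n a i (t - 1) - aC n a i t := by
            intro t ht
            rw [Finset.mem_Icc] at ht
            rw [tY_Tf lam a hn (by omega) (by omega) (by omega),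
              tZ_Tf lam a ⟨h1, by omega, ht.2⟩]
            have h := E1 lam a h1 (show (t - 1) + 1 ≠ n by omega)
            rw [show t - 1 + 1 = t by omega] at h
            exact h
          rw [Finset.sum_congr rfl hc, tele_dn' _ (by omega) (by omega), Nat.add_sub_cancel]
        rw [hsum]
        have e2c := E2c lam a (i := i)
        have e2a := E2a lam a (i := i)
        linarith
    · rw [if_neg hjc]
      unfold gB
      rw [if_neg hi]
      by_cases hjn : j = n
      · replace hjn := hjn.symm
        subst hjn
        rw [show 2 * n - 1 - n = n - 1 by omega, if_pos rfl, sumYZ lam a hn h1 hi2 le_rfl,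
          tU_Tf lam a ⟨h1, hi2⟩, tY_Tf lam a hn (by omega) (by omega) le_rfl]
        have h := E2d lam a h1 (by omega)
        rw [aB_def n a i (n - 1), show 2 * n - 1 - (n - 1) = n by omega] at h
        linarith
      · rw [if_neg (by omega : ¬(2 * n - 1 - j = n - 1)), sumYZ lam a hn h1 hi2 (by omega),
          aB_def, show 2 * n - 1 - (2 * n - 1 - j) = j by omega]

variable (w : TPt n)

lemma aB_Sf (hn : 3 ≤ n) {i j : ℕ} (h1 : 1 ≤ i) (hi2 : i ≤ n - 2) (hj0 : i ≤ j + 1)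
    (hj : j ≤ n - 2) :
    aB n (Sf n lam w) i j = ∑ t ∈ Icc i j, (tY n lam w i t - tZ n w i t) := by
  rcases Nat.lt_or_ge j i with h | h
  · rw [Finset.Icc_eq_empty (by omega), Finset.sum_empty, aB_def, aC_oor n _ (by omega)]
  · rw [aB_def, aC_def n _
      (⟨h1, by omega, by omega⟩ : 1 ≤ i ∧ i ≤ 2 * n - 1 - j ∧ 2 * n - 1 - j ≤ 2 * n - 1 - i)]
    simp only [Sf]
    rw [if_neg (by omega : ¬(2 * n - 1 - j ≤ n - 1))]
    unfold gB
    rw [show 2 * n - 1 - (2 * n - 1 - j) = j by omega, if_neg (by omega : ¬(i = n - 1)),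
      if_neg (by omega : ¬(j = n - 1))]

lemma aB_Sf_n1 (hn : 3 ≤ n) {i : ℕ} (h1 : 1 ≤ i) (hi2 : i ≤ n - 2) :
    aB n (Sf n lam w) i (n - 1) = (∑ t ∈ Icc i (n - 2), (tY n lam w i t - tZ n w i t))
      + tU n w i - tY n lam w (i + 1) n := by
  rw [aB_def, show 2 * n - 1 - (n - 1) = n by omega, aC_def n _ ⟨h1, by omega, by omega⟩]
  simp only [Sf]
  rw [if_neg (by omega : ¬(n ≤ n - 1)), show 2 * n - 1 - n = n - 1 by omega]
  unfold gB
  rw [if_neg (by omega : ¬(i = n - 1)), if_pos rfl]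

lemma aC_Sf_n1 (hn : 3 ≤ n) {i : ℕ} (h1 : 1 ≤ i) (hi2 : i ≤ n - 2) :
    aC n (Sf n lam w) i (n - 1) = tU n w i - tY n lam w i n
      + ∑ t ∈ Icc i (n - 2), (tY n lam w i t - tZ n w i t) := by
  rw [aC_def n _ ⟨h1, by omega, by omega⟩]
  simp only [Sf]
  rw [if_pos (le_refl (n - 1))]
  unfold gC
  rw [if_neg (by omega : ¬(i = n - 1)), if_pos rfl]

lemma aC_Sf_lt (hn : 3 ≤ n) {i j : ℕ} (h1 : 1 ≤ i) (hi2 : i ≤ n - 2) (hij : i ≤ j)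
    (hj : j ≤ n - 2) :
    aC n (Sf n lam w) i j = (tU n w i - tY n lam w i n
      + ∑ t ∈ Icc i (n - 2), (tY n lam w i t - tZ n w i t))
      + (tD n w i - tY n lam w (i + 1) n)
      + ∑ t ∈ Icc (j + 1) (n - 2), (tY n lam w (i + 1) t - tZ n w i t) := by
  rw [aC_def n _ ⟨h1, hij, by omega⟩]
  simp only [Sf]
  rw [if_pos (by omega : j ≤ n - 1)]
  unfold gC
  rw [if_neg (by omega : ¬(i = n - 1)), if_neg (by omega : ¬(j = n - 1))]

lemma aC_Sf_last (hn : 3 ≤ n) :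
    aC n (Sf n lam w) (n - 1) (n - 1) = tY n lam w (n - 1) (n - 1) - tL n w := by
  rw [aC_def n _ ⟨by omega, le_rfl, by omega⟩]
  simp only [Sf]
  rw [if_pos (le_refl (n - 1))]
  unfold gC
  rw [if_pos rfl]

lemma aB_Sf_last (hn : 3 ≤ n) :
    aB n (Sf n lam w) (n - 1) (n - 1) = tL n w - tY n lam w n n := by
  rw [aB_def, show 2 * n - 1 - (n - 1) = n by omega, aC_def n _ ⟨by omega, by omega, by omega⟩]
  simp only [Sf]
  rw [if_neg (by omega : ¬(n ≤ n - 1)), show 2 * n - 1 - n = n - 1 by omega]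
  unfold gB
  rw [if_pos rfl]

lemma dC (hn : 3 ≤ n) {k j : ℕ} (h1 : 1 ≤ k) (hk : k ≤ n - 2) (hkj : k + 1 ≤ j)
    (hj : j ≤ n - 2) :
    aC n (Sf n lam w) k (j - 1) - aC n (Sf n lam w) k j = tY n lam w (k + 1) j - tZ n w k j := by
  rw [aC_Sf_lt lam w hn h1 hk (by omega) (by omega), aC_Sf_lt lam w hn h1 hk (by omega) hj,
    show j - 1 + 1 = j by omega, sum_Icc_bot hj (fun t => tY n lam w (k + 1) t - tZ n w k t)]
  ring

lemma dC_top (hn : 3 ≤ n) {k : ℕ} (h1 : 1 ≤ k) (hk : k ≤ n - 2) :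
    aC n (Sf n lam w) k (n - 2) - aC n (Sf n lam w) k (n - 1) = tD n w k
      - tY n lam w (k + 1) n := by
  rw [aC_Sf_lt lam w hn h1 hk hk le_rfl, aC_Sf_n1 lam w hn h1 hk,
    Finset.Icc_eq_empty (by omega : ¬(n - 2 + 1 ≤ n - 2)), Finset.sum_empty]
  ring

lemma dB (hn : 3 ≤ n) {k j : ℕ} (h1 : 1 ≤ k) (hk : k ≤ n - 2) (hkj : k ≤ j) (hj1 : 1 ≤ j)
    (hj : j ≤ n - 2) :
    aB n (Sf n lam w) k j - aB n (Sf n lam w) k (j - 1) = tY n lam w k j - tZ n w k j := by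
  rw [aB_Sf lam w hn h1 hk (by omega) hj, aB_Sf lam w hn h1 hk (by omega) (by omega),
    sum_Icc_top hj1 hkj]
  ring

lemma dB_top (hn : 3 ≤ n) {k : ℕ} (h1 : 1 ≤ k) (hk : k ≤ n - 2) :
    aB n (Sf n lam w) k (n - 1) - aB n (Sf n lam w) k (n - 2) = tU n w k
      - tY n lam w (k + 1) n := by
  rw [aB_Sf_n1 lam w hn h1 hk, aB_Sf lam w hn h1 hk (by omega) le_rfl]
  ring

lemma dCB (hn : 3 ≤ n) {k : ℕ} (h1 : 1 ≤ k) (hk : k ≤ n - 2) :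
    aC n (Sf n lam w) k (n - 1) - aB n (Sf n lam w) k (n - 1)
      = tY n lam w (k + 1) n - tY n lam w k n := by
  rw [aC_Sf_n1 lam w hn h1 hk, aB_Sf_n1 lam w hn h1 hk]
  ring

lemma fY_Sf (hn : 3 ≤ n) (hw : w ∈ Vlam n lam) {i j : ℕ} (h1 : 1 ≤ i) (hi : i ≤ n - 1)
    (hij : i ≤ j) (hj : j ≤ n) : fY n lam (Sf n lam w) i j = tY n lam w i j := by
  have htel : ∀ g : ℕ → ℝ, ∑ k ∈ Icc 1 (i - 1), (g (k + 1) - g k) = g i - g 1 := by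
    intro g
    rw [tele_up g (by omega), show i - 1 + 1 = i by omega]
  by_cases hjn : j = n
  · replace hjn := hjn.symm
    subst hjn
    rw [fY_n lam _ (by omega)]
    have hc : ∀ k ∈ Icc 1 (i - 1), (aC n (Sf n lam w) k (n - 1) - aB n (Sf n lam w) k (n - 1))
        = tY n lam w (k + 1) n - tY n lam w k n := by
      intro k hk
      rw [Finset.mem_Icc] at hk
      exact dCB lam w hn hk.1 (by omega)
    rw [Finset.sum_congr rfl hc, htel (fun k => tY n lam w k n),
      tY_one lam w (by omega) le_rfl]
    ring
  · by_cases hj1 : j = n - 1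
    · subst hj1
      rw [fY_lt lam _ i (by omega), show n - 1 - 1 = n - 2 by omega]
      have hc : ∀ k ∈ Icc 1 (i - 1), (aC n (Sf n lam w) k (n - 2) - aC n (Sf n lam w) k (n - 1)
          + aB n (Sf n lam w) k (n - 2) - aB n (Sf n lam w) k (n - 1))
          = tY n lam w (k + 1) (n - 1) - tY n lam w k (n - 1) := by
        intro k hk
        rw [Finset.mem_Icc] at hk
        have e1 := dC_top lam w hn hk.1 (by omega)
        have e2 := dB_top lam w hn hk.1 (by omega)
        have e3 := hw k hk.1 (by omega)
        linarith
      rw [Finset.sum_congr rfl hc, htel (fun k => tY n lam w k (n - 1)),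
        tY_one lam w (by omega) (by omega)]
      ring
    · have hj2 : j ≤ n - 2 := by omega
      rw [fY_lt lam _ i hjn]
      have hc : ∀ k ∈ Icc 1 (i - 1), (aC n (Sf n lam w) k (j - 1) - aC n (Sf n lam w) k j
          + aB n (Sf n lam w) k (j - 1) - aB n (Sf n lam w) k j)
          = tY n lam w (k + 1) j - tY n lam w k j := by
        intro k hk
        rw [Finset.mem_Icc] at hk
        have e1 := dC lam w hn hk.1 (by omega) (by omega) hj2
        have e2 := dB lam w hn hk.1 (by omega) (by omega) (by omega) hj2
        linarith
      rw [Finset.sum_congr rfl hc, htel (fun k => tY n lam w k j), tY_one lam w (by omega) hj]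
      ring

lemma TS (hn : 3 ≤ n) (hw : w ∈ Vlam n lam) : Tf n lam (Sf n lam w) = w := by
  unfold Tf
  refine Prod.ext (funext fun p => ?_) (Prod.ext (funext fun p => ?_)
    (Prod.ext (funext fun p => ?_) (Prod.ext (funext fun p => ?_) ?_)))
  · obtain ⟨⟨i, j⟩, hp⟩ := p
    show fY n lam (Sf n lam w) i j = w.1 ⟨(i, j), hp⟩
    rw [← tY_ge2 lam w hp]
    by_cases hin : i = n
    · have hjn : j = n := by
        have := hp.2.1
        have := hp.2.2
        omega
      replace hin := hin.symm
      replace hjn := hjn.symm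
      subst hin
      subst hjn
      rw [fY_nn lam _ hn, fY_Sf lam w hn hw (by omega) (by omega) le_rfl (by omega),
        aC_Sf_last lam w hn, aB_Sf_last lam w hn]
      ring
    · have h2 : 2 ≤ i := hp.1
      exact fY_Sf lam w hn hw (by omega) (by
        have := hp.2.1
        have := hp.2.2
        omega) hp.2.1 hp.2.2
  · obtain ⟨⟨i, j⟩, hp⟩ := p
    show fZ n lam (Sf n lam w) i j = w.2.1 ⟨(i, j), hp⟩
    have h1 : 1 ≤ i := hp.1
    have hij : i ≤ j := hp.2.1
    have hj : j ≤ n - 2 := hp.2.2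
    have ht : tZ n w i j = w.2.1 ⟨(i, j), hp⟩ := by unfold tZ; rw [dif_pos hp]
    rw [← ht]
    simp only [fZ]
    rw [fY_Sf lam w hn hw (by omega) (by omega) hij (by omega),
      aB_Sf lam w hn h1 (by omega) (by omega) hj,
      aB_Sf lam w hn h1 (by omega) (by omega) (by omega),
      sum_Icc_top (by omega : 1 ≤ j) hij]
    ring
  · obtain ⟨i, hp⟩ := p
    show fU n lam (Sf n lam w) i = w.2.2.1 ⟨i, hp⟩
    have ht : tU n w i = w.2.2.1 ⟨i, hp⟩ := by unfold tU; rw [dif_pos hp]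
    rw [← ht]
    simp only [fU]
    rw [fY_Sf lam w hn hw hp.1 (by omega : i ≤ n - 1) (by omega) le_rfl,
      aC_Sf_n1 lam w hn hp.1 hp.2, aB_Sf lam w hn hp.1 hp.2 (by omega) le_rfl]
    ring
  · obtain ⟨i, hp⟩ := p
    show fD n lam (Sf n lam w) i = w.2.2.2.1 ⟨i, hp⟩
    have ht : tD n w i = w.2.2.2.1 ⟨i, hp⟩ := by unfold tD; rw [dif_pos hp]
    rw [← ht]
    simp only [fD]
    have hd := dC_top lam w hn hp.1 hp.2
    rw [fY_Sf lam w hn hw (by omega) (by omega : i + 1 ≤ n - 1) (by omega) le_rfl]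
    linarith
  · show fL n lam (Sf n lam w) = w.2.2.2.2
    have ht : tL n w = w.2.2.2.2 := rfl
    rw [← ht]
    simp only [fL]
    rw [fY_Sf lam w hn hw (by omega) le_rfl le_rfl (by omega), aC_Sf_last lam w hn]
    ring

end Inverse


/-! ### Membership transfer -/

section Membership

variable {n : ℕ} (lam : ℕ → ℝ) (a : SIdx n → ℝ) (m : ℕ → ℕ)
variable (hn : 3 ≤ n)
variable (hlam1 : ∀ j, 1 ≤ j → j ≤ n - 2 →
      lam j = (∑ t ∈ Finset.Icc j (n - 2), (m t : ℝ)) + ((m (n - 1) : ℝ) + (m n : ℝ)) / 2)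
variable (hlam2 : lam (n - 1) = ((m (n - 1) : ℝ) + (m n : ℝ)) / 2)
variable (hlam3 : lam n = ((m n : ℝ) - (m (n - 1) : ℝ)) / 2)

include hn hlam1 hlam2 hlam3 in
lemma Tf_mem_tGT (ha : a ∈ QPoly n m) : Tf n lam a ∈ tGT n lam := by
  obtain ⟨q1, q2, q3, q4a, q4b, q5, q6⟩ := ha
  refine ⟨Tf_mem_V lam a hn, ?_, ?_, ?_, ?_, ?_⟩
  · -- family 1
    intro i j hi1 hi2 hij hj
    constructor
    · rw [tY_Tf lam a hn hi1 hij (by omega), tZ_Tf lam a ⟨hi1, hij, hj⟩]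
      have hE := E3 lam a (i := i) (j := j)
      rcases Nat.eq_or_lt_of_le hij with heq | hlt
      · have h0 : aB n a i (i - 1) = 0 := aB_pred n a hi1 (by omega)
        have h5 := (q2 i hi1 hi2).2.2.2.2
        subst heq
        linarith
      · have hq := q3 i j hi1 hi2 (by omega) hj
        linarith
    · rw [tY_Tf lam a hn hi1 (by omega) (by omega), tZ_Tf lam a ⟨hi1, hij, hj⟩]
      have hE := E5b lam a m hn hlam1 hlam2 (i := i) (by omega : 1 ≤ j) hj
      have hq := (q5 i j hi1 (by omega) hij hj).2
      linarith
  · -- family 2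
    intro i j hi1 hi2 hij hj
    constructor
    · rw [tY_Tf lam a hn (by omega) (by omega) (by omega), tZ_Tf lam a ⟨hi1, by omega, by omega⟩]
      have hE := E5a lam a m hn hlam1 hlam2 (i := i) hi1 (by omega : 1 ≤ j - 1)
        (by omega : j - 1 ≤ n - 2)
      rw [show j - 1 + 1 = j by omega] at hE
      have hq := (q5 i (j - 1) hi1 (by omega) (by omega) (by omega)).1
      rw [show j - 1 + 1 = j by omega] at hq
      linarith
    · rw [tY_Tf lam a hn (by omega) (by omega) (by omega), tZ_Tf lam a ⟨hi1, by omega, hj⟩]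
      have hE := E1 lam a hi1 (show (j - 1) + 1 ≠ n by omega)
      rw [show j - 1 + 1 = j by omega] at hE
      have hq := q1 i (j - 1) hi1 hi2 (by omega) (by omega)
      rw [show j - 1 + 1 = j by omega] at hq
      linarith
  · -- family 3
    intro i hi1 hi2
    rw [tY_Tf lam a hn (by omega) (by omega) (by omega), tZ_Tf lam a ⟨hi1, hi2, le_rfl⟩]
    have hE := E5a lam a m hn hlam1 hlam2 (i := i) hi1 (by omega : 1 ≤ n - 2) le_rfl
    rw [show n - 2 + 1 = n - 1 by omega] at hE
    have hq := (q5 i (n - 2) hi1 (by omega) hi2 le_rfl).1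
    rw [show n - 2 + 1 = n - 1 by omega] at hq
    linarith
  · -- family 4
    intro i hi1 hi2
    have t1 := tY_Tf lam a hn hi1 (by omega : i ≤ n - 1) (by omega)
    have t2 := tY_Tf lam a hn (by omega : 1 ≤ i + 1) (by omega : i + 1 ≤ n - 1) (by omega)
    have t3 := tY_Tf lam a hn hi1 (by omega : i ≤ n) le_rfl
    have t4 := tY_Tf lam a hn (by omega : 1 ≤ i + 1) (by omega : i + 1 ≤ n) le_rfl
    have tu := tU_Tf lam a ⟨hi1, hi2⟩
    have td := tD_Tf lam a ⟨hi1, hi2⟩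
    have e6a := E6a lam a m hn hlam2 hlam3 (show i ≠ n by omega)
    have e6b := E6b lam a m hn hlam2 hlam3 hi1 (by omega)
    simp only [sS1] at e6a
    simp only [sS2] at e6b
    have eV := EV lam a hn hi1 hi2
    have e2a := E2a lam a (i := i)
    have e2b := E2b lam a hi1 (by omega)
    have e2c := E2c lam a (i := i)
    have e2d := E2d lam a hi1 (by omega)
    have hq6 := q6 i hi1 (by omega)
    have hq2 := q2 i hi1 hi2
    refine ⟨?_, ?_, ?_, ?_, ?_, ?_⟩
    · rw [t1, tu]; linarith [hq6.1, e6a]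
    · rw [tu, t3, t4]
      exact max_le (by linarith [e2c, hq2.2.2.1]) (by linarith [e2d, hq2.2.2.2.1])
    · rw [tu, t1, t3, t4]; linarith [e6b, hq6.2]
    · rw [t2, td]; linarith [eV, e6a, hq6.1]
    · rw [td, t3, t4]
      exact max_le (by linarith [e2b, hq2.2.1]) (by linarith [e2a, hq2.1])
    · rw [td, t2, t3, t4]; linarith [eV, e6b, hq6.2]
  · -- family 5
    have t1 := tY_Tf lam a hn (by omega : 1 ≤ n - 1) (le_refl (n - 1)) (by omega)
    have t2 := tY_Tf lam a hn (by omega : 1 ≤ n - 1) (by omega : n - 1 ≤ n) le_rfl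
    have t3 := tY_Tf lam a hn (by omega : 1 ≤ n) (le_refl n) le_rfl
    have e4a := E4a lam a
    have e4b := E4b lam a hn
    have e6a' := E6a' lam a m hn hlam2 hlam3
    have e6b' := E6b' lam a m hn hlam2 hlam3
    simp only [sS1] at e6a'
    simp only [sS2] at e6b'
    have h0 := aB_last n a hn
    have hq6 := q6 (n - 1) (by omega) le_rfl
    refine ⟨?_, ?_, ?_⟩
    · rw [t1, tL_Tf]; linarith [e4a, q4a]
    · rw [tL_Tf, t2, t3]
      exact max_le (by linarith [e6a', hq6.1, h0]) (by linarith [e4b, q4b])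
    · rw [tL_Tf, t1, t2, t3]; linarith [e6b', hq6.2, h0]

variable (w : TPt n)

include hn hlam1 hlam2 hlam3 in
lemma Sf_mem_Q (hw : w ∈ tGT n lam) : Sf n lam w ∈ QPoly n m := by
  obtain ⟨hV, g1, g2, g3, g4, g5⟩ := hw
  set a := Sf n lam w with hadef
  have hTS : Tf n lam a = w := TS lam w hn hV
  have hY : ∀ i j, 1 ≤ i → i ≤ j → j ≤ n → fY n lam a i j = tY n lam w i j := by
    intro i j h1 h2 h3
    rw [← tY_Tf lam a hn h1 h2 h3, hTS]
  have hZ : ∀ i j, 1 ≤ i → i ≤ j → j ≤ n - 2 → fZ n lam a i j = tZ n w i j := by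
    intro i j h1 h2 h3
    rw [← tZ_Tf lam a ⟨h1, h2, h3⟩, hTS]
  have hU : ∀ i, 1 ≤ i → i ≤ n - 2 → fU n lam a i = tU n w i := by
    intro i h1 h2
    rw [← tU_Tf lam a ⟨h1, h2⟩, hTS]
  have hD : ∀ i, 1 ≤ i → i ≤ n - 2 → fD n lam a i = tD n w i := by
    intro i h1 h2
    rw [← tD_Tf lam a ⟨h1, h2⟩, hTS]
  have hL : fL n lam a = tL n w := by rw [← tL_Tf lam a, hTS]
  refine ⟨?_, ?_, ?_, ?_, ?_, ?_, ?_⟩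
  · intro i j hi1 hi2 hij hj
    have hE := E1 lam a hi1 (show j + 1 ≠ n by omega)
    have g := (g2 i (j + 1) hi1 hi2 (by omega) (by omega)).2
    rw [← hY (i + 1) (j + 1) (by omega) (by omega) (by omega),
      ← hZ i (j + 1) hi1 (by omega) (by omega)] at g
    linarith
  · intro i hi1 hi2
    have g4i := g4 i hi1 hi2
    have e2a := E2a lam a (i := i)
    have e2b := E2b lam a hi1 (by omega)
    have e2c := E2c lam a (i := i)
    have e2d := E2d lam a hi1 (by omega)
    have gU1 : tY n lam w i n ≤ tU n w i := le_trans (le_max_left _ _) g4i.2.1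
    have gU2 : tY n lam w (i + 1) n ≤ tU n w i := le_trans (le_max_right _ _) g4i.2.1
    have gD1 : tY n lam w i n ≤ tD n w i := le_trans (le_max_left _ _) g4i.2.2.2.2.1
    have gD2 : tY n lam w (i + 1) n ≤ tD n w i := le_trans (le_max_right _ _) g4i.2.2.2.2.1
    rw [← hU i hi1 hi2, ← hY i n hi1 (by omega) le_rfl] at gU1
    rw [← hU i hi1 hi2, ← hY (i + 1) n (by omega) (by omega) le_rfl] at gU2
    rw [← hD i hi1 hi2, ← hY i n hi1 (by omega) le_rfl] at gD1
    rw [← hD i hi1 hi2, ← hY (i + 1) n (by omega) (by omega) le_rfl] at gD2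
    have hE3 := E3 lam a (i := i) (j := i)
    have h0 : aB n a i (i - 1) = 0 := aB_pred n a hi1 (by omega)
    have g11 := (g1 i i hi1 hi2 le_rfl hi2).1
    rw [← hY i i hi1 le_rfl (by omega), ← hZ i i hi1 le_rfl hi2] at g11
    exact ⟨by linarith, by linarith, by linarith, by linarith, by linarith⟩
  · intro i j hi1 hi2 hij hj
    have hE := E3 lam a (i := i) (j := j)
    have g := (g1 i j hi1 hi2 (by omega) hj).1
    rw [← hY i j hi1 (by omega) (by omega), ← hZ i j hi1 (by omega) hj] at g
    linarith
  · have hE := E4a lam a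
    have g := g5.1
    rw [← hY (n - 1) (n - 1) (by omega) le_rfl (by omega), ← hL] at g
    linarith
  · have hE := E4b lam a hn
    have g : tY n lam w n n ≤ tL n w := le_trans (le_max_right _ _) g5.2.1
    rw [← hY n n (by omega) le_rfl le_rfl, ← hL] at g
    linarith
  · intro i j hi1 hi2 hij hj
    have hi2' : i ≤ n - 2 := by omega
    constructor
    · have hE := E5a lam a m hn hlam1 hlam2 (i := i) hi1 (by omega) hj
      by_cases hc : j + 1 ≤ n - 2
      · have g := (g2 i (j + 1) hi1 hi2' (by omega) hc).1
        rw [Nat.add_sub_cancel] at g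
        rw [← hY (i + 1) (j + 1) (by omega) (by omega) (by omega),
          ← hZ i j hi1 hij (by omega)] at g
        linarith
      · have hj' : j = n - 2 := by omega
        subst hj'
        have g := g3 i hi1 hi2'
        rw [show n - 2 + 1 = n - 1 by omega] at hE
        rw [← hY (i + 1) (n - 1) (by omega) (by omega) (by omega),
          ← hZ i (n - 2) hi1 hij le_rfl] at g
        rw [show n - 2 + 1 = n - 1 by omega]
        linarith
    · have hE := E5b lam a m hn hlam1 hlam2 (i := i) (by omega) hj
      have g := (g1 i j hi1 hi2' hij hj).2
      rw [← hY i (j + 1) hi1 (by omega) (by omega), ← hZ i j hi1 hij hj] at g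
      linarith
  · intro i hi1 hi2
    by_cases hc : i ≤ n - 2
    · have e6a := E6a lam a m hn hlam2 hlam3 (show i ≠ n by omega)
      have e6b := E6b lam a m hn hlam2 hlam3 hi1 (by omega)
      simp only [sS1] at e6a
      simp only [sS2] at e6b
      have g := g4 i hi1 hc
      have ga := g.1
      have gb := g.2.2.1
      rw [← hY i (n - 1) hi1 (by omega) (by omega), ← hU i hi1 hc] at ga
      rw [← hU i hi1 hc, ← hY i (n - 1) hi1 (by omega) (by omega),
        ← hY i n hi1 (by omega) le_rfl, ← hY (i + 1) n (by omega) (by omega) le_rfl] at gb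
      exact ⟨by linarith, by linarith⟩
    · have hi' : i = n - 1 := by omega
      subst hi'
      have e6a := E6a' lam a m hn hlam2 hlam3
      have e6b := E6b' lam a m hn hlam2 hlam3
      simp only [sS1] at e6a
      simp only [sS2] at e6b
      have h0 := aB_last n a hn
      have ga : tY n lam w (n - 1) n ≤ tL n w := le_trans (le_max_left _ _) g5.2.1
      have gb := g5.2.2
      rw [← hY (n - 1) n (by omega) (by omega) le_rfl, ← hL] at ga
      rw [← hL, ← hY (n - 1) (n - 1) (by omega) le_rfl (by omega),
        ← hY (n - 1) n (by omega) (by omega) le_rfl, ← hY n n (by omega) le_rfl le_rfl] at gb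
      exact ⟨by linarith, by linarith⟩

end Membership


/-! ### Lattice points -/

section Lattice

variable {n : ℕ} (lam : ℕ → ℝ) (a : SIdx n → ℝ) (m : ℕ → ℕ)

lemma isZ_sum {s : Finset ℕ} {f : ℕ → ℝ} (h : ∀ x ∈ s, ∃ k : ℤ, f x = k) :
    ∃ k : ℤ, ∑ x ∈ s, f x = k :=
  Finset.sum_induction f (fun x => ∃ k : ℤ, x = (k : ℝ))
    (fun x y hx hy => by
      obtain ⟨kx, hkx⟩ := hx
      obtain ⟨ky, hky⟩ := hy
      exact ⟨kx + ky, by rw [hkx, hky]; push_cast; ring⟩)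
    ⟨0, by norm_num⟩ h

variable (hn : 3 ≤ n)
variable (hlam1 : ∀ j, 1 ≤ j → j ≤ n - 2 →
      lam j = (∑ t ∈ Finset.Icc j (n - 2), (m t : ℝ)) + ((m (n - 1) : ℝ) + (m n : ℝ)) / 2)
variable (hlam2 : lam (n - 1) = ((m (n - 1) : ℝ) + (m n : ℝ)) / 2)
variable (hlam3 : lam n = ((m n : ℝ) - (m (n - 1) : ℝ)) / 2)

include hn hlam1 hlam2 hlam3 in
lemma lam_residue :
    ∃ r : ℝ, (r = 0 ∨ r = 1 / 2) ∧ ∀ j, 1 ≤ j → j ≤ n → ∃ k : ℤ, lam j = k + r := by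
  rcases Nat.even_or_odd (m (n - 1) + m n) with ⟨c, hc⟩ | ⟨c, hc⟩
  · refine ⟨0, Or.inl rfl, ?_⟩
    have hcc : (m (n - 1) : ℝ) + (m n : ℝ) = (c : ℝ) + (c : ℝ) := by exact_mod_cast hc
    intro j h1 h2
    rcases (by omega : j ≤ n - 2 ∨ j = n - 1 ∨ j = n) with h | h | h
    · refine ⟨(∑ t ∈ Icc j (n - 2), (m t : ℤ)) + c, ?_⟩
      rw [hlam1 j h1 h]
      push_cast
      linarith
    · refine ⟨c, ?_⟩
      rw [h, hlam2]
      push_cast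
      linarith
    · refine ⟨c - m (n - 1), ?_⟩
      rw [h, hlam3]
      push_cast
      linarith
  · refine ⟨1 / 2, Or.inr rfl, ?_⟩
    have hcc : (m (n - 1) : ℝ) + (m n : ℝ) = 2 * (c : ℝ) + 1 := by exact_mod_cast hc
    intro j h1 h2
    rcases (by omega : j ≤ n - 2 ∨ j = n - 1 ∨ j = n) with h | h | h
    · refine ⟨(∑ t ∈ Icc j (n - 2), (m t : ℤ)) + c, ?_⟩
      rw [hlam1 j h1 h]
      push_cast
      linarith
    · refine ⟨c, ?_⟩
      rw [h, hlam2]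
      push_cast
      linarith
    · refine ⟨c - m (n - 1), ?_⟩
      rw [h, hlam3]
      push_cast
      linarith

include hn in
lemma Tf_residue {r : ℝ} (hlamr : ∀ j, 1 ≤ j → j ≤ n → ∃ k : ℤ, lam j = k + r)
    (ha : ∀ p : SIdx n, ∃ k : ℤ, a p = k) :
    (∀ p : DYIdx n, ∃ k : ℤ, (Tf n lam a).1 p = k + r) ∧
    (∀ p : DZIdx n, ∃ k : ℤ, (Tf n lam a).2.1 p = k + r) ∧
    (∀ p : DUIdx n, ∃ k : ℤ, (Tf n lam a).2.2.1 p = k + r) ∧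
    (∀ p : DUIdx n, ∃ k : ℤ, (Tf n lam a).2.2.2.1 p = k + r) ∧
    (∃ k : ℤ, (Tf n lam a).2.2.2.2 = k + r) := by
  have haC : ∀ i j, ∃ k : ℤ, aC n a i j = k := by
    intro i j
    unfold aC
    split
    · exact ha _
    · exact ⟨0, by norm_num⟩
  have haB : ∀ i j, ∃ k : ℤ, aB n a i j = k := fun i j => haC i _
  have hterm4 : ∀ (u v : ℕ) (x : ℕ), ∃ k : ℤ,
      aC n a x u - aC n a x v + aB n a x u - aB n a x v = k := by
    intro u v x
    obtain ⟨a1, e1⟩ := haC x u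
    obtain ⟨a2, e2⟩ := haC x v
    obtain ⟨a3, e3⟩ := haB x u
    obtain ⟨a4, e4⟩ := haB x v
    exact ⟨a1 - a2 + a3 - a4, by rw [e1, e2, e3, e4]; push_cast; ring⟩
  have hsY : ∀ i j, ∃ k : ℤ, sY n a i j = k := by
    intro i j
    unfold sY
    split_ifs
    · obtain ⟨k1, h1⟩ := isZ_sum (fun x _ => hterm4 (n - 2) (n - 1) x)
      obtain ⟨b1, f1⟩ := haC (n - 1) (n - 1)
      obtain ⟨b2, f2⟩ := haB (n - 1) (n - 1)
      exact ⟨k1 - b1 - b2, by rw [h1, f1, f2]; push_cast; ring⟩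
    · refine isZ_sum fun x _ => ?_
      obtain ⟨a1, e1⟩ := haC x (n - 1)
      obtain ⟨a2, e2⟩ := haB x (n - 1)
      exact ⟨a1 - a2, by rw [e1, e2]; push_cast; ring⟩
    · exact isZ_sum fun x _ => hterm4 (j - 1) j x
  have hfY : ∀ i j, 1 ≤ j → j ≤ n → ∃ k : ℤ, fY n lam a i j = k + r := by
    intro i j h1 h3
    obtain ⟨ks, hs⟩ := hsY i j
    unfold fY cLam
    by_cases hjn : j = n
    · by_cases hin : i = n
      · rw [if_pos hjn, if_pos hin]
        obtain ⟨kl, hl⟩ := hlamr (n - 1) (by omega) (by omega)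
        exact ⟨kl + ks, by rw [hl, hs]; push_cast; ring⟩
      · rw [if_pos hjn, if_neg hin]
        obtain ⟨kl, hl⟩ := hlamr n (by omega) le_rfl
        exact ⟨kl + ks, by rw [hl, hs]; push_cast; ring⟩
    · rw [if_neg hjn]
      obtain ⟨kl, hl⟩ := hlamr j h1 h3
      exact ⟨kl + ks, by rw [hl, hs]; push_cast; ring⟩
  refine ⟨?_, ?_, ?_, ?_, ?_⟩
  · rintro ⟨⟨i, j⟩, hp⟩
    have h2 : 2 ≤ i := hp.1
    have hij : i ≤ j := hp.2.1
    have hjn : j ≤ n := hp.2.2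
    exact hfY i j (by omega) hjn
  · rintro ⟨⟨i, j⟩, hp⟩
    have h1 : 1 ≤ i := hp.1
    have hij : i ≤ j := hp.2.1
    have hj : j ≤ n - 2 := hp.2.2
    obtain ⟨ky, hy⟩ := hfY i j (by omega) (by omega)
    obtain ⟨k1, e1⟩ := haB i j
    obtain ⟨k2, e2⟩ := haB i (j - 1)
    refine ⟨ky - k1 + k2, ?_⟩
    show fZ n lam a i j = _
    simp only [fZ]
    rw [hy, e1, e2]
    push_cast
    ring
  · rintro ⟨i, hp⟩
    obtain ⟨ky, hy⟩ := hfY i n (by omega) le_rfl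
    obtain ⟨k1, e1⟩ := haC i (n - 1)
    obtain ⟨k2, e2⟩ := haB i (n - 2)
    refine ⟨ky + k1 - k2, ?_⟩
    show fU n lam a i = _
    simp only [fU]
    rw [hy, e1, e2]
    push_cast
    ring
  · rintro ⟨i, hp⟩
    obtain ⟨ky, hy⟩ := hfY (i + 1) n (by omega) le_rfl
    obtain ⟨k1, e1⟩ := haC i (n - 2)
    obtain ⟨k2, e2⟩ := haC i (n - 1)
    refine ⟨ky + k1 - k2, ?_⟩
    show fD n lam a i = _
    simp only [fD]
    rw [hy, e1, e2]
    push_cast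
    ring
  · obtain ⟨ky, hy⟩ := hfY (n - 1) (n - 1) (by omega) (by omega)
    obtain ⟨k1, e1⟩ := haC (n - 1) (n - 1)
    refine ⟨ky - k1, ?_⟩
    show fL n lam a = _
    simp only [fL]
    rw [hy, e1]
    push_cast
    ring

variable (w : TPt n)

include hn in
lemma Sf_isZ {r : ℝ}
    (hY : ∀ p : DYIdx n, ∃ k : ℤ, w.1 p = k + r)
    (hZ : ∀ p : DZIdx n, ∃ k : ℤ, w.2.1 p = k + r)
    (hU : ∀ p : DUIdx n, ∃ k : ℤ, w.2.2.1 p = k + r)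
    (hD : ∀ p : DUIdx n, ∃ k : ℤ, w.2.2.2.1 p = k + r)
    (hL : ∃ k : ℤ, w.2.2.2.2 = k + r)
    (hlamr : ∀ j, 1 ≤ j → j ≤ n → ∃ k : ℤ, lam j = k + r) :
    ∀ p : SIdx n, ∃ k : ℤ, Sf n lam w p = k := by
  have htY : ∀ i j, 1 ≤ i → i ≤ j → j ≤ n → ∃ k : ℤ, tY n lam w i j = k + r := by
    intro i j h1 h2 h3
    by_cases hi : i = 1
    · subst hi
      rw [tY_one lam w (by omega) h3]
      exact hlamr j (by omega) h3
    · rw [tY_ge2 lam w ⟨by omega, h2, h3⟩]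
      exact hY _
  have htZ : ∀ i j, 1 ≤ i → i ≤ j → j ≤ n - 2 → ∃ k : ℤ, tZ n w i j = k + r := by
    intro i j h1 h2 h3
    unfold tZ
    rw [dif_pos ⟨h1, h2, h3⟩]
    exact hZ _
  have htU : ∀ i, 1 ≤ i → i ≤ n - 2 → ∃ k : ℤ, tU n w i = k + r := by
    intro i h1 h2
    unfold tU
    rw [dif_pos ⟨h1, h2⟩]
    exact hU _
  have htD : ∀ i, 1 ≤ i → i ≤ n - 2 → ∃ k : ℤ, tD n w i = k + r := by
    intro i h1 h2
    unfold tD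
    rw [dif_pos ⟨h1, h2⟩]
    exact hD _
  have htL : ∃ k : ℤ, tL n w = k + r := hL
  have hdiff : ∀ x y : ℝ, (∃ k : ℤ, x = k + r) → (∃ k : ℤ, y = k + r) →
      ∃ k : ℤ, x - y = (k : ℝ) := by
    rintro x y ⟨kx, hx⟩ ⟨ky, hy⟩
    exact ⟨kx - ky, by rw [hx, hy]; push_cast; ring⟩
  have hsum : ∀ i b : ℕ, 1 ≤ i → i ≤ n - 2 → b ≤ n - 2 →
      ∃ k : ℤ, ∑ t ∈ Icc i b, (tY n lam w i t - tZ n w i t) = k := by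
    intro i b h1 h2 hb
    refine isZ_sum fun t ht => ?_
    rw [Finset.mem_Icc] at ht
    exact hdiff _ _ (htY i t h1 ht.1 (by omega)) (htZ i t h1 ht.1 (by omega))
  have hsum2 : ∀ i c : ℕ, 1 ≤ i → i ≤ n - 2 → i + 1 ≤ c →
      ∃ k : ℤ, ∑ t ∈ Icc c (n - 2), (tY n lam w (i + 1) t - tZ n w i t) = k := by
    intro i c h1 h2 hc
    refine isZ_sum fun t ht => ?_
    rw [Finset.mem_Icc] at ht
    exact hdiff _ _ (htY (i + 1) t (by omega) (by omega) (by omega))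
      (htZ i t h1 (by omega) (by omega))
  intro p
  obtain ⟨⟨i, j⟩, hp⟩ := p
  have h1 : 1 ≤ i := hp.1
  have hij : i ≤ j := hp.2.1
  have hj2 : j ≤ 2 * n - 1 - i := hp.2.2
  have hin : i ≤ n - 1 := by omega
  simp only [Sf]
  split_ifs with hcs
  · unfold gC
    by_cases hi : i = n - 1
    · rw [if_pos hi]
      exact hdiff _ _ (htY (n - 1) (n - 1) (by omega) le_rfl (by omega)) htL
    · rw [if_neg hi]
      have hi2 : i ≤ n - 2 := by omega
      by_cases hj1 : j = n - 1
      · rw [if_pos hj1]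
        obtain ⟨k1, e1⟩ := hdiff _ _ (htU i h1 hi2) (htY i n h1 (by omega) le_rfl)
        obtain ⟨k2, e2⟩ := hsum i (n - 2) h1 hi2 le_rfl
        refine ⟨k1 + k2, ?_⟩
        push_cast
        linarith
      · rw [if_neg hj1]
        obtain ⟨k1, e1⟩ := hdiff _ _ (htU i h1 hi2) (htY i n h1 (by omega) le_rfl)
        obtain ⟨k2, e2⟩ := hsum i (n - 2) h1 hi2 le_rfl
        obtain ⟨k3, e3⟩ := hdiff _ _ (htD i h1 hi2)
          (htY (i + 1) n (by omega) (by omega) le_rfl)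
        obtain ⟨k4, e4⟩ := hsum2 i (j + 1) h1 hi2 (by omega)
        refine ⟨k1 + k2 + k3 + k4, ?_⟩
        push_cast
        linarith
  · unfold gB
    by_cases hi : i = n - 1
    · rw [if_pos hi]
      exact hdiff _ _ htL (htY n n (by omega) le_rfl le_rfl)
    · rw [if_neg hi]
      have hi2 : i ≤ n - 2 := by omega
      by_cases hj1 : 2 * n - 1 - j = n - 1
      · rw [if_pos hj1]
        obtain ⟨k1, e1⟩ := hsum i (n - 2) h1 hi2 le_rfl
        obtain ⟨k2, e2⟩ := hdiff _ _ (htU i h1 hi2)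
          (htY (i + 1) n (by omega) (by omega) le_rfl)
        refine ⟨k1 + k2, ?_⟩
        push_cast
        linarith
      · rw [if_neg hj1]
        exact hsum i (2 * n - 1 - j) h1 hi2 (by omega)

end Lattice

end St12
/-- There is an injective affine map `T : ℝ^{n(n−1)} → ℝ^{n²−2}` with image `V_λ`,
mapping the standard `Dₙ` string polytope `Qₙ(m)` bijectively onto the tweaked
Gelfand–Tsetlin polytope `tGT(λ)`, such that a point `a ∈ Qₙ(m)` is a lattice point if
and only if the coordinates of `T(a)` together with `λ_1, …, λ_n` are either all
integers or all half-integers. -/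
theorem statement12 (n : ℕ) (hn : 3 ≤ n) (m : ℕ → ℕ) (lam : ℕ → ℝ)
    (hlam1 : ∀ j, 1 ≤ j → j ≤ n - 2 →
      lam j = (∑ t ∈ Finset.Icc j (n - 2), (m t : ℝ)) + ((m (n - 1) : ℝ) + (m n : ℝ)) / 2)
    (hlam2 : lam (n - 1) = ((m (n - 1) : ℝ) + (m n : ℝ)) / 2)
    (hlam3 : lam n = ((m n : ℝ) - (m (n - 1) : ℝ)) / 2) :
    ∃ T : (SIdx n → ℝ) →ᵃ[ℝ] TPt n,
      Function.Injective T ∧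
      Set.range T = Vlam n lam ∧
      Set.BijOn T (QPoly n m) (tGT n lam) ∧
      ∀ a ∈ QPoly n m,
        ((∀ p : SIdx n, ∃ k : ℤ, a p = k) ↔
          (((∀ p, ∃ k : ℤ, (T a).1 p = k) ∧
            (∀ p, ∃ k : ℤ, (T a).2.1 p = k) ∧
            (∀ p, ∃ k : ℤ, (T a).2.2.1 p = k) ∧
            (∀ p, ∃ k : ℤ, (T a).2.2.2.1 p = k) ∧
            (∃ k : ℤ, (T a).2.2.2.2 = k) ∧
            (∀ j, 1 ≤ j → j ≤ n → ∃ k : ℤ, lam j = k)) ∨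
           ((∀ p, ∃ k : ℤ, (T a).1 p = k + 1 / 2) ∧
            (∀ p, ∃ k : ℤ, (T a).2.1 p = k + 1 / 2) ∧
            (∀ p, ∃ k : ℤ, (T a).2.2.1 p = k + 1 / 2) ∧
            (∀ p, ∃ k : ℤ, (T a).2.2.2.1 p = k + 1 / 2) ∧
            (∃ k : ℤ, (T a).2.2.2.2 = k + 1 / 2) ∧
            (∀ j, 1 ≤ j → j ≤ n → ∃ k : ℤ, lam j = k + 1 / 2)))) := by
  classical
  obtain ⟨r, hr, hlamr⟩ := St12.lam_residue lam m hn hlam1 hlam2 hlam3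
  have hinj : Function.Injective (St12.Tmap n lam) := by
    intro x y hxy
    have h : St12.Sf n lam (St12.Tf n lam x) = St12.Sf n lam (St12.Tf n lam y) := by
      rw [← St12.Tmap_apply n lam x, ← St12.Tmap_apply n lam y, hxy]
    rwa [St12.ST lam x hn, St12.ST lam y hn] at h
  refine ⟨St12.Tmap n lam, hinj, ?_, ⟨?_, hinj.injOn, ?_⟩, ?_⟩
  · ext w
    constructor
    · rintro ⟨x, rfl⟩
      rw [St12.Tmap_apply]
      exact St12.Tf_mem_V lam x hn
    · intro hw
      exact ⟨St12.Sf n lam w, by rw [St12.Tmap_apply]; exact St12.TS lam w hn hw⟩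
  · intro x hx
    show St12.Tmap n lam x ∈ tGT n lam
    rw [St12.Tmap_apply]
    exact St12.Tf_mem_tGT lam x m hn hlam1 hlam2 hlam3 hx
  · intro w hw
    exact ⟨St12.Sf n lam w, St12.Sf_mem_Q lam m hn hlam1 hlam2 hlam3 w hw,
      by rw [St12.Tmap_apply]; exact St12.TS lam w hn hw.1⟩
  · intro a _
    constructor
    · intro ha
      obtain ⟨hY, hZ, hU, hD, hL⟩ := St12.Tf_residue lam a hn hlamr ha
      rcases hr with rfl | rfl
      · left
        refine ⟨?_, ?_, ?_, ?_, ?_, ?_⟩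
        · intro p
          obtain ⟨k, hk⟩ := hY p
          exact ⟨k, by rw [St12.Tmap_apply, hk]; ring⟩
        · intro p
          obtain ⟨k, hk⟩ := hZ p
          exact ⟨k, by rw [St12.Tmap_apply, hk]; ring⟩
        · intro p
          obtain ⟨k, hk⟩ := hU p
          exact ⟨k, by rw [St12.Tmap_apply, hk]; ring⟩
        · intro p
          obtain ⟨k, hk⟩ := hD p
          exact ⟨k, by rw [St12.Tmap_apply, hk]; ring⟩
        · obtain ⟨k, hk⟩ := hL
          exact ⟨k, by rw [St12.Tmap_apply, hk]; ring⟩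
        · intro j h1 h2
          obtain ⟨k, hk⟩ := hlamr j h1 h2
          exact ⟨k, by rw [hk]; ring⟩
      · right
        refine ⟨?_, ?_, ?_, ?_, ?_, ?_⟩
        · intro p
          obtain ⟨k, hk⟩ := hY p
          exact ⟨k, by rw [St12.Tmap_apply, hk]⟩
        · intro p
          obtain ⟨k, hk⟩ := hZ p
          exact ⟨k, by rw [St12.Tmap_apply, hk]⟩
        · intro p
          obtain ⟨k, hk⟩ := hU p
          exact ⟨k, by rw [St12.Tmap_apply, hk]⟩
        · intro p
          obtain ⟨k, hk⟩ := hD p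
          exact ⟨k, by rw [St12.Tmap_apply, hk]⟩
        · obtain ⟨k, hk⟩ := hL
          exact ⟨k, by rw [St12.Tmap_apply, hk]⟩
        · exact hlamr
    · intro h
      have key : ∀ p : SIdx n, ∃ k : ℤ, St12.Sf n lam (St12.Tf n lam a) p = k := by
        have hTa : St12.Tmap n lam a = St12.Tf n lam a := St12.Tmap_apply n lam a
        rcases h with ⟨h1, h2, h3, h4, h5, h6⟩ | ⟨h1, h2, h3, h4, h5, h6⟩
        · rw [hTa] at h1 h2 h3 h4 h5
          refine St12.Sf_isZ lam hn (St12.Tf n lam a) (r := 0) ?_ ?_ ?_ ?_ ?_ ?_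
          · intro p
            obtain ⟨k, hk⟩ := h1 p
            exact ⟨k, by rw [hk]; ring⟩
          · intro p
            obtain ⟨k, hk⟩ := h2 p
            exact ⟨k, by rw [hk]; ring⟩
          · intro p
            obtain ⟨k, hk⟩ := h3 p
            exact ⟨k, by rw [hk]; ring⟩
          · intro p
            obtain ⟨k, hk⟩ := h4 p
            exact ⟨k, by rw [hk]; ring⟩
          · obtain ⟨k, hk⟩ := h5
            exact ⟨k, by rw [hk]; ring⟩
          · intro j hj1 hj2
            obtain ⟨k, hk⟩ := h6 j hj1 hj2
            exact ⟨k, by rw [hk]; ring⟩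
        · rw [hTa] at h1 h2 h3 h4 h5
          exact St12.Sf_isZ lam hn (St12.Tf n lam a) (r := 1 / 2) h1 h2 h3 h4 h5 h6
      intro p
      have hk := key p
      rwa [St12.ST lam a hn] at hk
end

section
/- Let n ≥ 4 and let m_1, …, m_n be nonnegative integers with m_{n−1} + m_n odd. Then the standard D_n string polytope Q_n(m) is not a lattice polytope: it has a vertex (extreme point) not lying in ℤ^{n(n−1)}. -/
/-!
Write `d = (m_{n-1} - m_n)/2` and `s = (m_{n-1} + m_n)/2`. The vertex has only two nonzero
rows: listing row `i` as `a_{i,i}, …, a_{i,2n-1-i}`, row `n-3` is `(d⁺ + d⁻, d⁺ + d⁻, d⁺, d⁻, 0, 0)`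
and row `n-2` is `(s, s, s, 0)`; its entry `a_{n-2,n-2} = s` is not an integer.

It is extreme because every coordinate is nonnegative on `Qₙ(m)`: a nonnegative linear
functional that vanishes at an interior point of a segment vanishes at its ends, so a point `x₁`
of `Qₙ(m)` with the vertex in an open segment `(x₁, x₂)` vanishes wherever the vertex does. The
seven remaining coordinates of `x₁` are then pinned down by the vanishing of `d⁺` or `d⁻` and by
six inequalities of `Qₙ(m)` that are tight at the vertex, since these hold with equality at `x₁`
by the same segment argument.
-/

open Finset

theorem Finset.sum_eq_ite_add_ite {ι M : Type*} [AddCommMonoid M] [DecidableEq ι] (s : Finset ι)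
    {f : ι → M} {a b : ι} (hab : a ≠ b) (hf : ∀ k, k ≠ a → k ≠ b → f k = 0) :
    ∑ k ∈ s, f k = (if a ∈ s then f a else 0) + (if b ∈ s then f b else 0) := by
  rw [← sum_ite_eq' s a f, ← sum_ite_eq' s b f, ← sum_add_distrib]
  refine sum_congr rfl fun k _ => ?_
  by_cases ha : k = a
  · simp [ha, hab]
  · by_cases hb : k = b <;> simp [ha, hb, hf, hab.symm]

theorem LinearMap.eq_of_mem_openSegment_of_le {E : Type*} [AddCommGroup E] [Module ℝ E]
    (f : E →ₗ[ℝ] ℝ) {c : ℝ} {x x₁ x₂ : E} (hx : x ∈ openSegment ℝ x₁ x₂)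
    (h₁ : c ≤ f x₁) (h₂ : c ≤ f x₂) (hc : f x = c) : f x₁ = c := by
  obtain ⟨a, b, ha, hb, hab, rfl⟩ := hx
  rw [map_add, map_smul, map_smul, smul_eq_mul, smul_eq_mul] at hc
  obtain rfl : b = 1 - a := by linarith
  refine le_antisymm ?_ h₁
  nlinarith [mul_nonneg hb.le (sub_nonneg.2 h₂)]

variable {n : ℕ} {m : ℕ → ℕ} {a x x₁ x₂ : SIdx n → ℝ} {i j : ℕ}

section Coordinates

def aCLin (n i j : ℕ) : (SIdx n → ℝ) →ₗ[ℝ] ℝ where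
  toFun a := aC n a i j
  map_add' a b := by unfold aC; split_ifs <;> simp
  map_smul' c a := by unfold aC; split_ifs <;> simp

@[simp]
theorem aCLin_apply : aCLin n i j a = aC n a i j := rfl

theorem eq_of_forall_aC_eq (h : ∀ i j, aC n x i j = aC n a i j) : x = a := by
  funext ⟨⟨i, j⟩, hij⟩
  simpa only [aC, dif_pos hij] using h i j

theorem aB_sub_one (hn : 1 ≤ n) : aB n a i (n - 1) = aC n a i n := by
  rw [aB, show 2 * n - 1 - (n - 1) = n by omega]

theorem aB_sub_two (hn : 2 ≤ n) : aB n a i (n - 2) = aC n a i (n + 1) := by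
  rw [aB, show 2 * n - 1 - (n - 2) = n + 1 by omega]

end Coordinates

section Nonneg

theorem aB_nonneg_of_mem_QPoly (ha : a ∈ QPoly n m) (hi : 1 ≤ i) (hin : i ≤ n - 2)
    (hij : i ≤ j) (hj : j ≤ n - 1) : 0 ≤ aB n a i j := by
  obtain ⟨-, hmid, hchain, -⟩ := ha
  have hle : ∀ j, i ≤ j → j ≤ n - 2 → 0 ≤ aB n a i j := by
    intro j hij
    induction j, hij using Nat.le_induction with
    | base => exact fun _ => (hmid i hi hin).2.2.2.2
    | succ j hij ih =>
      intro hj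
      have := hchain i (j + 1) hi hin (by omega) hj
      rw [Nat.add_sub_cancel] at this
      linarith [ih (by omega)]
  rcases (by omega : j ≤ n - 2 ∨ j = n - 1) with hj | rfl
  · exact hle j hij hj
  · linarith [(hmid i hi hin).2.2.2.1, hle (n - 2) hin le_rfl]

theorem aC_nonneg_of_mem_QPoly_of_le (ha : a ∈ QPoly n m) (hi : 1 ≤ i) (hin : i ≤ n - 2)
    (hij : i ≤ j) (hj : j ≤ n - 1) : 0 ≤ aC n a i j := by
  have hlast : 0 ≤ aC n a i (n - 1) :=
    (aB_nonneg_of_mem_QPoly ha hi hin hin (by omega)).trans (ha.2.1 i hi hin).2.2.1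
  have hle : ∀ j, j ≤ n - 2 → i ≤ j → 0 ≤ aC n a i j := by
    intro j hj
    induction hj using Nat.decreasingInduction with
    | self => exact fun _ => hlast.trans (ha.2.1 i hi hin).1
    | of_succ j hj ih => exact fun hij => (ih (by omega)).trans (ha.1 i j hi hin hij hj)
  rcases (by omega : j ≤ n - 2 ∨ j = n - 1) with hj | rfl
  · exact hle j hj hij
  · exact hlast

theorem aC_nonneg_of_mem_QPoly (ha : a ∈ QPoly n m) (i j : ℕ) : 0 ≤ aC n a i j := by
  by_cases hr : 1 ≤ i ∧ i ≤ j ∧ j ≤ 2 * n - 1 - i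
  swap
  · rw [aC, dif_neg hr]
  rcases (by omega : i = n - 1 ∨ i ≤ n - 2) with hi | hin
  · subst i
    rcases (by omega : j = n - 1 ∨ j = n) with hj | hj <;> subst j
    · exact ha.2.2.2.1
    · simpa only [aB_sub_one (by omega : 1 ≤ n)] using ha.2.2.2.2.1
  · rcases (by omega : j ≤ n - 1 ∨ n ≤ j) with hj | hj
    · exact aC_nonneg_of_mem_QPoly_of_le ha hr.1 hin hr.2.1 hj
    · have := aB_nonneg_of_mem_QPoly ha hr.1 hin (j := 2 * n - 1 - j) (by omega) (by omega)
      rwa [aB, show 2 * n - 1 - (2 * n - 1 - j) = j by omega] at this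

theorem aC_eq_zero_of_mem_openSegment (h₁ : x₁ ∈ QPoly n m) (h₂ : x₂ ∈ QPoly n m)
    (hx : x ∈ openSegment ℝ x₁ x₂) (h : aC n x i j = 0) : aC n x₁ i j = 0 :=
  (aCLin n i j).eq_of_mem_openSegment_of_le hx (aC_nonneg_of_mem_QPoly h₁ i j)
    (aC_nonneg_of_mem_QPoly h₂ i j) h

end Nonneg

section Vertex

variable {p q s : ℝ}

noncomputable def vertexEntry (n : ℕ) (p q s : ℝ) (i j : ℕ) : ℝ :=
  if i = n - 3 ∧ (j = n - 3 ∨ j = n - 2) then p + q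
  else if i = n - 3 ∧ j = n - 1 then p
  else if i = n - 3 ∧ j = n then q
  else if i = n - 2 ∧ n - 2 ≤ j ∧ j ≤ n then s
  else 0

noncomputable def stringVertex (n : ℕ) (p q s : ℝ) : SIdx n → ℝ :=
  fun x => vertexEntry n p q s x.1.1 x.1.2

theorem aC_stringVertex (hn : 4 ≤ n) (i j : ℕ) :
    aC n (stringVertex n p q s) i j = vertexEntry n p q s i j := by
  unfold aC
  split_ifs
  · rfl
  · unfold vertexEntry
    split_ifs <;> first | rfl | omega

@[simp]
theorem aC_stringVertex_eq_p_add_q (hn : 4 ≤ n) (hi : i = n - 3) (hj : n - 3 ≤ j ∧ j ≤ n - 2) :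
    aC n (stringVertex n p q s) i j = p + q := by
  rw [aC_stringVertex hn, vertexEntry, if_pos (by omega)]

@[simp]
theorem aC_stringVertex_eq_p (hn : 4 ≤ n) (hi : i = n - 3) (hj : j = n - 1) :
    aC n (stringVertex n p q s) i j = p := by
  rw [aC_stringVertex hn, vertexEntry, if_neg (by omega), if_pos (by omega)]

@[simp]
theorem aC_stringVertex_eq_q (hn : 4 ≤ n) (hi : i = n - 3) (hj : j = n) :
    aC n (stringVertex n p q s) i j = q := by
  rw [aC_stringVertex hn, vertexEntry, if_neg (by omega), if_neg (by omega), if_pos (by omega)]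

@[simp]
theorem aC_stringVertex_eq_s (hn : 4 ≤ n) (hi : i = n - 2) (hj : n - 2 ≤ j ∧ j ≤ n) :
    aC n (stringVertex n p q s) i j = s := by
  rw [aC_stringVertex hn, vertexEntry, if_neg (by omega), if_neg (by omega), if_neg (by omega),
    if_pos (by omega)]

@[simp]
theorem aC_stringVertex_eq_zero (hn : 4 ≤ n)
    (h : ¬((i = n - 3 ∧ n - 3 ≤ j ∨ i = n - 2 ∧ n - 2 ≤ j) ∧ j ≤ n)) :
    aC n (stringVertex n p q s) i j = 0 := by
  rw [aC_stringVertex hn, vertexEntry, if_neg (by omega), if_neg (by omega), if_neg (by omega),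
    if_neg (by omega)]

theorem sSum_stringVertex (hn : 4 ≤ n) (hij : i ≤ j) (hj : j ≤ n - 2) :
    sSum n (stringVertex n p q s) i j = 0 := by
  rw [sSum, sum_eq_ite_add_ite _ (show n - 3 ≠ n - 2 by omega) fun k _ _ => by
    simp (disch := omega) only [aB, aC_stringVertex_eq_zero]; ring]
  rcases (by omega : i ≤ n - 3 ∨ i = n - 2) with hi | hi
  · simp (disch := omega) only [mem_Icc, if_neg]; ring
  · simp (disch := omega) only [mem_Icc, if_pos, if_neg, aB, aC_stringVertex_eq_p_add_q,
      aC_stringVertex_eq_p, aC_stringVertex_eq_q, aC_stringVertex_eq_zero]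
    ring

theorem stringVertex_mem_QPoly (hn : 4 ≤ n) (hp : 0 ≤ p) (hq : 0 ≤ q) (hpm : p ≤ m (n - 1))
    (hqm : q ≤ m n) (hs₁ : s = m (n - 1) + q - p) (hs₂ : s = m n + p - q) :
    stringVertex n p q s ∈ QPoly n m := by
  have hM := (m (n - 1)).cast_nonneg (α := ℝ)
  have hN := (m n).cast_nonneg (α := ℝ)
  have hs : 0 ≤ s := by linarith
  refine ⟨?_, ?_, ?_, ?_, ?_, ?_, ?_⟩
  · intro i j _ _ _ _
    rcases eq_or_ne i (n - 3) with hi | hi <;> simp (disch := omega)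
  · intro i _ _
    rcases (by omega : i = n - 3 ∨ i = n - 2 ∨ (i ≠ n - 3 ∧ i ≠ n - 2)) with hi | hi | hi <;>
      simp (disch := omega) [aB, hp, hq, hs]
  · intro i j _ _ _ _
    rcases eq_or_ne i (n - 3) with hi | hi <;> simp (disch := omega) [aB]
  · simp (disch := omega)
  · simp (disch := omega) [aB]
  · intro i j _ _ hij hj
    rw [sSum_stringVertex hn hij hj]
    have := (m j).cast_nonneg (α := ℝ)
    rcases (by omega : i = n - 3 ∧ j = n - 3 ∨ i = n - 3 ∧ j = n - 2 ∨ i = n - 2 ∨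
      (i ≠ n - 3 ∧ i ≠ n - 2)) with hi | hi | hi | hi <;> simp (disch := omega) [aB]
    all_goals linarith
  · intro i _ _
    have hne : n - 3 ≠ n - 2 := by omega
    rw [sum_eq_ite_add_ite _ hne fun k _ _ => by simp (disch := omega) [aB],
      sum_eq_ite_add_ite _ hne fun k _ _ => by simp (disch := omega) [aB]]
    rcases (by omega : i ≤ n - 4 ∨ i = n - 3 ∨ i = n - 2 ∨ i = n - 1) with hi | hi | hi | hi <;>
      simp (disch := omega) [aB, if_pos, if_neg] <;> constructor <;> linarith

end Vertex

section Face

variable {p q s : ℝ}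

theorem face_ineqs_of_mem_QPoly (hn : 4 ≤ n) (hx : x ∈ QPoly n m)
    (hz : ∀ i j, ¬((i = n - 3 ∧ n - 3 ≤ j ∨ i = n - 2 ∧ n - 2 ≤ j) ∧ j ≤ n) → aC n x i j = 0) :
    aC n x (n - 3) (n - 2) ≤ aC n x (n - 3) (n - 3) ∧
    aC n x (n - 3) (n - 1) ≤ aC n x (n - 3) (n - 2) ∧
    aC n x (n - 3) n ≤ aC n x (n - 3) (n - 2) ∧
    aC n x (n - 2) (n - 1) ≤ aC n x (n - 2) (n - 2) ∧
    aC n x (n - 2) n ≤ aC n x (n - 2) (n - 2) ∧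
    aC n x (n - 2) (n - 1) ≤ m (n - 1) + aC n x (n - 3) (n - 2) - 2 * aC n x (n - 3) (n - 1) ∧
    aC n x (n - 2) n ≤ m n + aC n x (n - 3) (n - 2) - 2 * aC n x (n - 3) n := by
  obtain ⟨hchain, hmid, -, -, -, -, hupper⟩ := hx
  have hchain' := hchain (n - 3) (n - 3) (by omega) (by omega) le_rfl (by omega)
  rw [show n - 3 + 1 = n - 2 by omega] at hchain'
  have hr := hmid (n - 3) (by omega) (by omega)
  have hr' := hmid (n - 2) (by omega) (by omega)
  have hne : n - 3 ≠ n - 2 := by omega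
  have hu := hupper (n - 2) (by omega) (by omega)
  rw [sum_eq_ite_add_ite _ hne fun k _ _ => by simp (disch := omega) only [aB, hz]; ring,
    sum_eq_ite_add_ite _ hne fun k _ _ => by simp (disch := omega) only [aB, hz]; ring] at hu
  simp (disch := omega) only [mem_Icc, if_pos, if_neg, aB_sub_one, aB_sub_two, hz] at hr hr' hu
  refine ⟨hchain', hr.1, hr.2.1, hr'.1, hr'.2.1, ?_, ?_⟩ <;> linarith [hu.1, hu.2]

theorem eq_stringVertex_of_aC_eq (hn : 4 ≤ n)
    (hz : ∀ i j, ¬((i = n - 3 ∧ n - 3 ≤ j ∨ i = n - 2 ∧ n - 2 ≤ j) ∧ j ≤ n) → aC n x i j = 0)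
    (h₃₃ : aC n x (n - 3) (n - 3) = p + q) (h₃₂ : aC n x (n - 3) (n - 2) = p + q)
    (h₃₁ : aC n x (n - 3) (n - 1) = p) (h₃₀ : aC n x (n - 3) n = q)
    (h₂₂ : aC n x (n - 2) (n - 2) = s) (h₂₁ : aC n x (n - 2) (n - 1) = s)
    (h₂₀ : aC n x (n - 2) n = s) : x = stringVertex n p q s := by
  refine eq_of_forall_aC_eq fun i j => ?_
  by_cases hij : (i = n - 3 ∧ n - 3 ≤ j ∨ i = n - 2 ∧ n - 2 ≤ j) ∧ j ≤ n
  · rcases (by omega : i = n - 3 ∧ j = n - 3 ∨ i = n - 3 ∧ j = n - 2 ∨ i = n - 3 ∧ j = n - 1 ∨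
      i = n - 3 ∧ j = n ∨ i = n - 2 ∧ j = n - 2 ∨ i = n - 2 ∧ j = n - 1 ∨ i = n - 2 ∧ j = n)
      with ⟨hi, hj⟩ | ⟨hi, hj⟩ | ⟨hi, hj⟩ | ⟨hi, hj⟩ | ⟨hi, hj⟩ | ⟨hi, hj⟩ | ⟨hi, hj⟩ <;>
    subst i j <;> simp (disch := omega) [h₃₃, h₃₂, h₃₁, h₃₀, h₂₂, h₂₁, h₂₀]
  · rw [hz i j hij, aC_stringVertex_eq_zero hn hij]

theorem face_eqs_of_mem_openSegment (hn : 4 ≤ n) (hs₁ : s = m (n - 1) + q - p)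
    (hs₂ : s = m n + p - q) (h₁ : x₁ ∈ QPoly n m) (h₂ : x₂ ∈ QPoly n m)
    (hx : stringVertex n p q s ∈ openSegment ℝ x₁ x₂) :
    aC n x₁ (n - 3) (n - 3) = aC n x₁ (n - 3) (n - 2) ∧
    (q = 0 → aC n x₁ (n - 3) (n - 2) = aC n x₁ (n - 3) (n - 1)) ∧
    (p = 0 → aC n x₁ (n - 3) (n - 2) = aC n x₁ (n - 3) n) ∧
    aC n x₁ (n - 2) (n - 2) = aC n x₁ (n - 2) (n - 1) ∧
    aC n x₁ (n - 2) (n - 2) = aC n x₁ (n - 2) n ∧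
    aC n x₁ (n - 2) (n - 1) = m (n - 1) + aC n x₁ (n - 3) (n - 2) - 2 * aC n x₁ (n - 3) (n - 1) ∧
    aC n x₁ (n - 2) n = m n + aC n x₁ (n - 3) (n - 2) - 2 * aC n x₁ (n - 3) n := by
  set v := stringVertex n p q s
  have tight (f : (SIdx n → ℝ) →ₗ[ℝ] ℝ) (c : ℝ) (h₁ : c ≤ f x₁) (h₂ : c ≤ f x₂) (h : f v = c) :
      f x₁ = c :=
    f.eq_of_mem_openSegment_of_le hx h₁ h₂ h
  have I₁ := face_ineqs_of_mem_QPoly hn h₁ fun i j h =>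
    aC_eq_zero_of_mem_openSegment h₁ h₂ hx (aC_stringVertex_eq_zero hn h)
  have I₂ := face_ineqs_of_mem_QPoly hn h₂ fun i j h =>
    aC_eq_zero_of_mem_openSegment h₂ h₁ (openSegment_symm ℝ x₁ x₂ ▸ hx)
      (aC_stringVertex_eq_zero hn h)
  have hA := tight (aCLin n (n - 3) (n - 3) - aCLin n (n - 3) (n - 2)) 0
    (by simpa using I₁.1) (by simpa using I₂.1) (by simp (disch := omega) [v])
  have hB (hq : q = 0) := tight (aCLin n (n - 3) (n - 2) - aCLin n (n - 3) (n - 1)) 0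
    (by simpa using I₁.2.1) (by simpa using I₂.2.1) (by simp (disch := omega) [v, hq])
  have hB' (hp : p = 0) := tight (aCLin n (n - 3) (n - 2) - aCLin n (n - 3) n) 0
    (by simpa using I₁.2.2.1) (by simpa using I₂.2.2.1) (by simp (disch := omega) [v, hp])
  have hD := tight (aCLin n (n - 2) (n - 2) - aCLin n (n - 2) (n - 1)) 0
    (by simpa using I₁.2.2.2.1) (by simpa using I₂.2.2.2.1) (by simp (disch := omega) [v])
  have hD' := tight (aCLin n (n - 2) (n - 2) - aCLin n (n - 2) n) 0
    (by simpa using I₁.2.2.2.2.1) (by simpa using I₂.2.2.2.2.1) (by simp (disch := omega) [v])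
  have hE := tight
    (aCLin n (n - 3) (n - 2) - (2 : ℝ) • aCLin n (n - 3) (n - 1) - aCLin n (n - 2) (n - 1))
    (-m (n - 1)) (by simp; linarith [I₁.2.2.2.2.2.1]) (by simp; linarith [I₂.2.2.2.2.2.1])
    (by simp (disch := omega) [v]; linarith)
  have hF := tight (aCLin n (n - 3) (n - 2) - (2 : ℝ) • aCLin n (n - 3) n - aCLin n (n - 2) n)
    (-m n) (by simp; linarith [I₁.2.2.2.2.2.2]) (by simp; linarith [I₂.2.2.2.2.2.2])
    (by simp (disch := omega) [v]; linarith)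
  simp only [LinearMap.sub_apply, LinearMap.smul_apply, aCLin_apply, smul_eq_mul, sub_eq_zero]
    at hA hB hB' hD hD' hE hF
  exact ⟨hA, hB, hB', hD, hD', by linarith, by linarith⟩

theorem eq_stringVertex_of_mem_openSegment (hn : 4 ≤ n) (hpq : p = 0 ∨ q = 0)
    (hs₁ : s = m (n - 1) + q - p) (hs₂ : s = m n + p - q)
    (h₁ : x₁ ∈ QPoly n m) (h₂ : x₂ ∈ QPoly n m)
    (hx : stringVertex n p q s ∈ openSegment ℝ x₁ x₂) : x₁ = stringVertex n p q s := by
  have zero (i j : ℕ) : aC n (stringVertex n p q s) i j = 0 → aC n x₁ i j = 0 :=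
    aC_eq_zero_of_mem_openSegment h₁ h₂ hx
  obtain ⟨hA, hB, hB', hD, hD', hE, hF⟩ := face_eqs_of_mem_openSegment hn hs₁ hs₂ h₁ h₂ hx
  have hrow : aC n x₁ (n - 3) (n - 2) = p + q ∧ aC n x₁ (n - 3) (n - 1) = p ∧
      aC n x₁ (n - 3) n = q := by
    rcases hpq with hp | hq
    · have hC := zero (n - 3) (n - 1) (by simp (disch := omega) [hp])
      have := hB' hp
      refine ⟨?_, ?_, ?_⟩ <;> linarith
    · have hC := zero (n - 3) n (by simp (disch := omega) [hq])
      have := hB hq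
      refine ⟨?_, ?_, ?_⟩ <;> linarith
  exact eq_stringVertex_of_aC_eq hn (fun i j h => zero i j (aC_stringVertex_eq_zero hn h))
    (by linarith) hrow.1 hrow.2.1 hrow.2.2 (by linarith) (by linarith) (by linarith)

theorem stringVertex_mem_extremePoints (hn : 4 ≤ n) (hp : 0 ≤ p) (hq : 0 ≤ q)
    (hpm : p ≤ m (n - 1)) (hqm : q ≤ m n) (hpq : p = 0 ∨ q = 0)
    (hs₁ : s = m (n - 1) + q - p) (hs₂ : s = m n + p - q) :
    stringVertex n p q s ∈ (QPoly n m).extremePoints ℝ :=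
  ⟨stringVertex_mem_QPoly hn hp hq hpm hqm hs₁ hs₂,
    fun _ h₁ _ h₂ hx => eq_stringVertex_of_mem_openSegment hn hpq hs₁ hs₂ h₁ h₂ hx⟩

end Face

theorem natCast_div_two_ne_intCast {N : ℕ} (hN : Odd N) (k : ℤ) : (N : ℝ) / 2 ≠ k := by
  intro h
  rw [div_eq_iff two_ne_zero] at h
  have : (N : ℤ) = k * 2 := by exact_mod_cast h
  obtain ⟨l, rfl⟩ := hN
  omega

/-- For `n ≥ 4` and `m_{n−1} + m_n` odd, the standard `Dₙ` string polytope is not a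
lattice polytope: it has a vertex not lying in `ℤ^{n(n−1)}`. -/
theorem statement14 (n : ℕ) (hn : 4 ≤ n) (m : ℕ → ℕ) (hpar : Odd (m (n - 1) + m n)) :
    ∃ a ∈ (QPoly n m).extremePoints ℝ, ¬ ∀ p : SIdx n, ∃ k : ℤ, a p = k := by
  obtain ⟨d, hd⟩ : ∃ d : ℝ, 2 * d = m (n - 1) - m n := ⟨_, mul_div_cancel₀ _ two_ne_zero⟩
  have hM := (m (n - 1)).cast_nonneg (α := ℝ)
  have hN := (m n).cast_nonneg (α := ℝ)
  have hd' := posPart_sub_negPart d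
  set s : ℝ := ((m (n - 1) + m n : ℕ) : ℝ) / 2 with hs
  have hs₁ : s = m (n - 1) + d⁻ - d⁺ := by push_cast [hs]; linarith
  refine ⟨stringVertex n d⁺ d⁻ s, stringVertex_mem_extremePoints hn (posPart_nonneg d)
    (negPart_nonneg d) (by rw [posPart_def]; exact max_le (by linarith) hM)
    (by rw [negPart_def]; exact max_le (by linarith) hN) ?_ hs₁ (by linarith), ?_⟩
  · rcases le_total d 0 with h | h
    · exact .inl (posPart_eq_zero.2 h)
    · exact .inr (negPart_eq_zero.2 h)
  · intro hint
    obtain ⟨k, hk⟩ := hint ⟨(n - 2, n - 2), by omega, le_rfl, by omega⟩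
    have hval := aC_stringVertex_eq_s (p := d⁺) (q := d⁻) (s := s) hn rfl ⟨le_rfl, by omega⟩
    rw [aC, dif_pos ⟨by omega, le_rfl, by omega⟩] at hval
    exact natCast_div_two_ne_intCast hpar k (hval.symm.trans hk)
end

section
/- Let n = 3 and let m_1, m_2, m_3 be arbitrary nonnegative integers. Then the standard D_3 string polytope Q_3(m) ⊆ ℝ^6 is a lattice polytope: every vertex (extreme point) of Q_3(m) lies in ℤ^6. -/
def e11 : SIdx 3 := ⟨(1,1), by norm_num⟩
def e12 : SIdx 3 := ⟨(1,2), by norm_num⟩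
def e13 : SIdx 3 := ⟨(1,3), by norm_num⟩
def e14 : SIdx 3 := ⟨(1,4), by norm_num⟩
def e22 : SIdx 3 := ⟨(2,2), by norm_num⟩
def e23 : SIdx 3 := ⟨(2,3), by norm_num⟩

section evals
variable (a : SIdx 3 → ℝ)

@[simp] lemma aC11 : aC 3 a 1 1 = a e11 := by rw [aC, dif_pos]; rfl
@[simp] lemma aC12 : aC 3 a 1 2 = a e12 := by rw [aC, dif_pos]; rfl
@[simp] lemma aC13 : aC 3 a 1 3 = a e13 := by rw [aC, dif_pos]; rfl
@[simp] lemma aC14 : aC 3 a 1 4 = a e14 := by rw [aC, dif_pos]; rfl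
@[simp] lemma aC22 : aC 3 a 2 2 = a e22 := by rw [aC, dif_pos]; rfl
@[simp] lemma aC23 : aC 3 a 2 3 = a e23 := by rw [aC, dif_pos]; rfl
@[simp] lemma aC15 : aC 3 a 1 5 = 0 := by rw [aC, dif_neg]; norm_num
@[simp] lemma aC24 : aC 3 a 2 4 = 0 := by rw [aC, dif_neg]; norm_num
@[simp] lemma aB10 : aB 3 a 1 0 = 0 := by rw [aB]; norm_num
@[simp] lemma aB11 : aB 3 a 1 1 = a e14 := by rw [aB]; norm_num
@[simp] lemma aB12 : aB 3 a 1 2 = a e13 := by rw [aB]; norm_num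
@[simp] lemma aB13 : aB 3 a 1 3 = a e12 := by rw [aB]; norm_num
@[simp] lemma aB21 : aB 3 a 2 1 = 0 := by rw [aB]; norm_num
@[simp] lemma aB22 : aB 3 a 2 2 = a e23 := by rw [aB]; norm_num
@[simp] lemma aB23 : aB 3 a 2 3 = a e22 := by rw [aB]; norm_num

@[simp] lemma sSum11 : sSum 3 a 1 1 = 0 := by simp [sSum]

end evals

lemma mem_iff (m : ℕ → ℕ) (a : SIdx 3 → ℝ) :
    a ∈ QPoly 3 m ↔
      (a e11 ≥ a e12 ∧ a e11 ≥ a e13 ∧ a e12 ≥ a e14 ∧ a e13 ≥ a e14 ∧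
       a e14 ≥ 0 ∧ a e22 ≥ 0 ∧ a e23 ≥ 0 ∧
       a e11 ≤ (m 1 : ℝ) + a e12 + a e13 - 2 * a e14 ∧
       a e14 ≤ (m 1 : ℝ) ∧
       a e12 ≤ (m 2 : ℝ) + a e14 ∧
       a e13 ≤ (m 3 : ℝ) + a e14 ∧
       a e22 ≤ (m 2 : ℝ) + a e11 - 2 * a e12 + a e14 ∧
       a e23 ≤ (m 3 : ℝ) + a e11 - 2 * a e13 + a e14) := by
  constructor
  · intro h
    obtain ⟨h1, h2, h3, h4, h5, h6, h7⟩ := h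
    have g2 := h2 1 (by norm_num) (by norm_num)
    have g61 := h6 1 1 (by norm_num) (by norm_num) (by norm_num) (by norm_num)
    have g71 := h7 1 (by norm_num) (by norm_num)
    have g72 := h7 2 (by norm_num) (by norm_num)
    norm_num at g2 g61 g71 g72 h4 h5 ⊢
    try simp only [Finset.Icc_self, Finset.sum_singleton] at g72
    try norm_num at g72
    refine ⟨g2.1, g2.2.1, g2.2.2.1, g2.2.2.2.1, g2.2.2.2.2, h4, h5, ?_, ?_, ?_, ?_, ?_, ?_⟩
      <;> linarith [g61.1, g61.2, g71.1, g71.2, g72.1, g72.2]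
  · rintro ⟨c1, c2, c3, c4, c5, c6, c7, c8, c9, c10, c11, c12, c13⟩
    refine ⟨?_, ?_, ?_, ?_, ?_, ?_, ?_⟩
    · intro i j hi hi2 hij hj; omega
    · intro i hi hi2
      have : i = 1 := by omega
      subst this
      norm_num
      exact ⟨c1, c2, c3, c4, c5⟩
    · intro i j hi hi2 hij hj; omega
    · norm_num; exact c6
    · norm_num; exact c7
    · intro i j hi hi2 hij hj
      have : i = 1 ∧ j = 1 := by omega
      obtain ⟨rfl, rfl⟩ := this
      norm_num
      exact ⟨by linarith, c9⟩
    · intro i hi hi2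
      have : i = 1 ∨ i = 2 := by omega
      rcases this with rfl | rfl
      · norm_num
        exact ⟨c10, c11⟩
      · norm_num
        try simp only [Finset.Icc_self, Finset.sum_singleton]
        try norm_num
        exact ⟨by linarith, by linarith⟩

def pt (x1 x2 x3 x4 y2 y3 : ℝ) : SIdx 3 → ℝ := fun z =>
  if z.1 = (1,1) then x1 else if z.1 = (1,2) then x2 else if z.1 = (1,3) then x3
  else if z.1 = (1,4) then x4 else if z.1 = (2,2) then y2 else y3

section ptev
variable (x1 x2 x3 x4 y2 y3 : ℝ)
@[simp] lemma pt11 : pt x1 x2 x3 x4 y2 y3 e11 = x1 := by simp [pt, e11]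
@[simp] lemma pt12 : pt x1 x2 x3 x4 y2 y3 e12 = x2 := by simp [pt, e12]
@[simp] lemma pt13 : pt x1 x2 x3 x4 y2 y3 e13 = x3 := by simp [pt, e13]
@[simp] lemma pt14 : pt x1 x2 x3 x4 y2 y3 e14 = x4 := by simp [pt, e14]
@[simp] lemma pt22 : pt x1 x2 x3 x4 y2 y3 e22 = y2 := by simp [pt, e22]
@[simp] lemma pt23 : pt x1 x2 x3 x4 y2 y3 e23 = y3 := by simp [pt, e23]
end ptev

lemma SIdx3_cases (z : SIdx 3) :
    z = e11 ∨ z = e12 ∨ z = e13 ∨ z = e14 ∨ z = e22 ∨ z = e23 := by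
  obtain ⟨⟨i, j⟩, hz⟩ := z
  simp only [e11, e12, e13, e14, e22, e23, Subtype.mk.injEq, Prod.mk.injEq]
  omega

lemma perturb_mem (m : ℕ → ℕ) (a : SIdx 3 → ℝ) (ha : a ∈ QPoly 3 m)
    (ε gs gp gq gr gu gv : ℝ) (hε : 0 < ε)
    (hs1 : -1 ≤ gs) (hs2 : gs ≤ 1) (hpa : -1 ≤ gp) (hpb : gp ≤ 1)
    (hqa : -1 ≤ gq) (hqb : gq ≤ 1) (hra : -1 ≤ gr) (hrb : gr ≤ 1)
    (hua : -3 ≤ gu) (hub : gu ≤ 3) (hva : -3 ≤ gv) (hvb : gv ≤ 3)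
    (D1 : gs + gq = 0 ∨ 8*ε ≤ a e11 - a e12)
    (D2 : gs + gp = 0 ∨ 8*ε ≤ a e11 - a e13)
    (D3 : gp = 0 ∨ 8*ε ≤ a e12 - a e14 ∧ 8*ε ≤ (m 2 : ℝ) - (a e12 - a e14))
    (D4 : gq = 0 ∨ 8*ε ≤ a e13 - a e14 ∧ 8*ε ≤ (m 3 : ℝ) - (a e13 - a e14))
    (D5 : gr = 0 ∨ 8*ε ≤ a e14 ∧ 8*ε ≤ (m 1 : ℝ) - a e14)
    (D6 : gu = 0 ∨ 8*ε ≤ a e22)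
    (D7 : gv = 0 ∨ 8*ε ≤ a e23)
    (D8 : gs + gr = 0 ∨ 8*ε ≤ (m 1 : ℝ) - (a e11 - a e12 - a e13 + 2*a e14))
    (D9 : gu - gs - gq + gp = 0 ∨ 8*ε ≤ (m 2 : ℝ) + a e11 - 2*a e12 + a e14 - a e22)
    (D10 : gv - gs - gp + gq = 0 ∨ 8*ε ≤ (m 3 : ℝ) + a e11 - 2*a e13 + a e14 - a e23) :
    pt (a e11 + ε*(gs+gp+gq+gr)) (a e12 + ε*(gp+gr)) (a e13 + ε*(gq+gr)) (a e14 + ε*gr)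
      (a e22 + ε*gu) (a e23 + ε*gv) ∈ QPoly 3 m := by
  rw [mem_iff] at ha ⊢
  obtain ⟨H1, H2, H3, H4, H5, H6, H7, H8, H9, H10, H11, H12, H13⟩ := ha
  have ms1 : ε*gs ≤ ε := by have := mul_le_mul_of_nonneg_left hs2 hε.le; linarith
  have ms2 : -ε ≤ ε*gs := by have := mul_le_mul_of_nonneg_left hs1 hε.le; linarith
  have mp1 : ε*gp ≤ ε := by have := mul_le_mul_of_nonneg_left hpb hε.le; linarith
  have mp2 : -ε ≤ ε*gp := by have := mul_le_mul_of_nonneg_left hpa hε.le; linarith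
  have mq1 : ε*gq ≤ ε := by have := mul_le_mul_of_nonneg_left hqb hε.le; linarith
  have mq2 : -ε ≤ ε*gq := by have := mul_le_mul_of_nonneg_left hqa hε.le; linarith
  have mr1 : ε*gr ≤ ε := by have := mul_le_mul_of_nonneg_left hrb hε.le; linarith
  have mr2 : -ε ≤ ε*gr := by have := mul_le_mul_of_nonneg_left hra hε.le; linarith
  have mu1 : ε*gu ≤ 3*ε := by have := mul_le_mul_of_nonneg_left hub hε.le; linarith
  have mu2 : -(3*ε) ≤ ε*gu := by have := mul_le_mul_of_nonneg_left hua hε.le; linarith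
  have mv1 : ε*gv ≤ 3*ε := by have := mul_le_mul_of_nonneg_left hvb hε.le; linarith
  have mv2 : -(3*ε) ≤ ε*gv := by have := mul_le_mul_of_nonneg_left hva hε.le; linarith
  simp only [pt11, pt12, pt13, pt14, pt22, pt23]
  refine ⟨?_, ?_, ?_, ?_, ?_, ?_, ?_, ?_, ?_, ?_, ?_, ?_, ?_⟩
  · rcases D1 with h0 | hsl
    · have hzz : ε*gs + ε*gq = ε*(gs + gq) := by ring
      rw [h0, mul_zero] at hzz
      linarith [H1, hzz]
    · linarith [hsl, hε, ms1, ms2, mp1, mp2, mq1, mq2, mr1, mr2, mu1, mu2, mv1, mv2]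
  · rcases D2 with h0 | hsl
    · have hzz : ε*gs + ε*gp = ε*(gs + gp) := by ring
      rw [h0, mul_zero] at hzz
      linarith [H2, hzz]
    · linarith [hsl, hε, ms1, ms2, mp1, mp2, mq1, mq2, mr1, mr2, mu1, mu2, mv1, mv2]
  · rcases D3 with h0 | hsl
    · have hzz : ε*gp = 0 := by rw [h0, mul_zero]
      linarith [H3, hzz]
    · linarith [hsl.1, hε, ms1, ms2, mp1, mp2, mq1, mq2, mr1, mr2, mu1, mu2, mv1, mv2]
  · rcases D4 with h0 | hsl
    · have hzz : ε*gq = 0 := by rw [h0, mul_zero]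
      linarith [H4, hzz]
    · linarith [hsl.1, hε, ms1, ms2, mp1, mp2, mq1, mq2, mr1, mr2, mu1, mu2, mv1, mv2]
  · rcases D5 with h0 | hsl
    · have hzz : ε*gr = 0 := by rw [h0, mul_zero]
      linarith [H5, hzz]
    · linarith [hsl.1, hε, ms1, ms2, mp1, mp2, mq1, mq2, mr1, mr2, mu1, mu2, mv1, mv2]
  · rcases D6 with h0 | hsl
    · have hzz : ε*gu = 0 := by rw [h0, mul_zero]
      linarith [H6, hzz]
    · linarith [hsl, hε, ms1, ms2, mp1, mp2, mq1, mq2, mr1, mr2, mu1, mu2, mv1, mv2]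
  · rcases D7 with h0 | hsl
    · have hzz : ε*gv = 0 := by rw [h0, mul_zero]
      linarith [H7, hzz]
    · linarith [hsl, hε, ms1, ms2, mp1, mp2, mq1, mq2, mr1, mr2, mu1, mu2, mv1, mv2]
  · rcases D8 with h0 | hsl
    · have hzz : ε*gs + ε*gr = ε*(gs + gr) := by ring
      rw [h0, mul_zero] at hzz
      linarith [H8, hzz]
    · linarith [hsl, hε, ms1, ms2, mp1, mp2, mq1, mq2, mr1, mr2, mu1, mu2, mv1, mv2]
  · rcases D5 with h0 | hsl
    · have hzz : ε*gr = 0 := by rw [h0, mul_zero]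
      linarith [H9, hzz]
    · linarith [hsl.2, hε, ms1, ms2, mp1, mp2, mq1, mq2, mr1, mr2, mu1, mu2, mv1, mv2]
  · rcases D3 with h0 | hsl
    · have hzz : ε*gp = 0 := by rw [h0, mul_zero]
      linarith [H10, hzz]
    · linarith [hsl.2, hε, ms1, ms2, mp1, mp2, mq1, mq2, mr1, mr2, mu1, mu2, mv1, mv2]
  · rcases D4 with h0 | hsl
    · have hzz : ε*gq = 0 := by rw [h0, mul_zero]
      linarith [H11, hzz]
    · linarith [hsl.2, hε, ms1, ms2, mp1, mp2, mq1, mq2, mr1, mr2, mu1, mu2, mv1, mv2]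
  · rcases D9 with h0 | hsl
    · have hzz : ε*gu + - ε*gs + - ε*gq + ε*gp = ε*(gu - gs - gq + gp) := by ring
      rw [h0, mul_zero] at hzz
      linarith [H12, hzz]
    · linarith [hsl, hε, ms1, ms2, mp1, mp2, mq1, mq2, mr1, mr2, mu1, mu2, mv1, mv2]
  · rcases D10 with h0 | hsl
    · have hzz : ε*gv + - ε*gs + - ε*gp + ε*gq = ε*(gv - gs - gp + gq) := by ring
      rw [h0, mul_zero] at hzz
      linarith [H13, hzz]
    · linarith [hsl, hε, ms1, ms2, mp1, mp2, mq1, mq2, mr1, mr2, mu1, mu2, mv1, mv2]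

lemma core (m1 m2 m3 : ℕ) (s p q r u v : ℝ)
    (hp0 : 0 ≤ p) (hp1 : p ≤ m2) (hq0 : 0 ≤ q) (hq1 : q ≤ m3)
    (hr0 : 0 ≤ r) (hr1 : r ≤ m1)
    (hsp : 0 ≤ s + p) (hsq : 0 ≤ s + q) (hsr : s + r ≤ m1)
    (hu0 : 0 ≤ u) (hu1 : u ≤ m2 + s + q - p)
    (hv0 : 0 ≤ v) (hv1 : v ≤ m3 + s + p - q)
    (H : ∀ ds dp dq dr du dv : ℝ, |ds| ≤ 1 → |dp| ≤ 1 → |dq| ≤ 1 → |dr| ≤ 1 →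
      |du| ≤ 3 → |dv| ≤ 3 →
      (dp ≠ 0 → 0 < p ∧ p < m2) → (dq ≠ 0 → 0 < q ∧ q < m3) →
      (dr ≠ 0 → 0 < r ∧ r < m1) →
      (ds + dp ≠ 0 → 0 < s + p) → (ds + dq ≠ 0 → 0 < s + q) →
      (ds + dr ≠ 0 → s + r < m1) →
      (du ≠ 0 → 0 < u) → (du - ds - dq + dp ≠ 0 → u < m2 + s + q - p) →
      (dv ≠ 0 → 0 < v) → (dv - ds - dp + dq ≠ 0 → v < m3 + s + p - q) →
      ds = 0 ∧ dp = 0 ∧ dq = 0 ∧ dr = 0 ∧ du = 0 ∧ dv = 0) :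
    ∃ S P Q R U V : ℤ, s = S ∧ p = P ∧ q = Q ∧ r = R ∧ u = U ∧ v = V := by
  -- Step 1: u is at a bound
  have step1 : u = 0 ∨ u = m2 + s + q - p := by
    by_contra hc
    push_neg at hc
    obtain ⟨n1, n2⟩ := hc
    have := H 0 0 0 0 1 0 (by norm_num) (by norm_num) (by norm_num) (by norm_num)
      (by norm_num) (by norm_num)
      (by intro hh; exact absurd (by norm_num) hh)
      (by intro hh; exact absurd (by norm_num) hh)
      (by intro hh; exact absurd (by norm_num) hh)
      (by intro hh; exact absurd (by norm_num) hh)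
      (by intro hh; exact absurd (by norm_num) hh)
      (by intro hh; exact absurd (by norm_num) hh)
      (fun _ => lt_of_le_of_ne hu0 (Ne.symm n1))
      (fun _ => lt_of_le_of_ne hu1 n2)
      (by intro hh; exact absurd (by norm_num) hh)
      (by intro hh; exact absurd (by norm_num) hh)
    exact absurd this.2.2.2.2.1 (by norm_num)
  have step2 : v = 0 ∨ v = m3 + s + p - q := by
    by_contra hc
    push_neg at hc
    obtain ⟨n1, n2⟩ := hc
    have := H 0 0 0 0 0 1 (by norm_num) (by norm_num) (by norm_num) (by norm_num)
      (by norm_num) (by norm_num)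
      (by intro hh; exact absurd (by norm_num) hh)
      (by intro hh; exact absurd (by norm_num) hh)
      (by intro hh; exact absurd (by norm_num) hh)
      (by intro hh; exact absurd (by norm_num) hh)
      (by intro hh; exact absurd (by norm_num) hh)
      (by intro hh; exact absurd (by norm_num) hh)
      (by intro hh; exact absurd (by norm_num) hh)
      (by intro hh; exact absurd (by norm_num) hh)
      (fun _ => lt_of_le_of_ne hv0 (Ne.symm n1))
      (fun _ => lt_of_le_of_ne hv1 n2)
    exact absurd this.2.2.2.2.2 (by norm_num)
  -- key reduced principle on (s,p,q,r)
  have key : ∀ ds dp dq dr : ℝ, |ds| ≤ 1 → |dp| ≤ 1 → |dq| ≤ 1 → |dr| ≤ 1 →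
      (dp ≠ 0 → 0 < p ∧ p < m2) → (dq ≠ 0 → 0 < q ∧ q < m3) →
      (dr ≠ 0 → 0 < r ∧ r < m1) →
      (ds + dp ≠ 0 → 0 < s + p) → (ds + dq ≠ 0 → 0 < s + q) →
      (ds + dr ≠ 0 → s + r < m1) →
      (ds + dq - dp ≠ 0 → 0 < m2 + s + q - p) →
      (ds + dp - dq ≠ 0 → 0 < m3 + s + p - q) →
      ds = 0 ∧ dp = 0 ∧ dq = 0 ∧ dr = 0 := by
    intro ds dp dq dr b1 b2 b3 b4 c1 c2 c3 c4 c5 c6 c7 c8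
    rw [abs_le] at b1 b2 b3 b4
    obtain ⟨du, hdub, hdu1, hdu2⟩ :
        ∃ du : ℝ, |du| ≤ 3 ∧ (du ≠ 0 → 0 < u) ∧
          (du - ds - dq + dp ≠ 0 → u < m2 + s + q - p) := by
      rcases step1 with h | h
      · refine ⟨0, by norm_num, by intro hh; exact absurd rfl hh, ?_⟩
        intro hh
        have hne : ds + dq - dp ≠ 0 := by intro e; apply hh; linarith
        have := c7 hne
        linarith
      · refine ⟨ds + dq - dp, by rw [abs_le]; constructor <;> linarith, ?_, ?_⟩
        · intro hh
          rw [h]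
          exact c7 hh
        · intro hh
          exact absurd (by ring) hh
    obtain ⟨dv, hdvb, hdv1, hdv2⟩ :
        ∃ dv : ℝ, |dv| ≤ 3 ∧ (dv ≠ 0 → 0 < v) ∧
          (dv - ds - dp + dq ≠ 0 → v < m3 + s + p - q) := by
      rcases step2 with h | h
      · refine ⟨0, by norm_num, by intro hh; exact absurd rfl hh, ?_⟩
        intro hh
        have hne : ds + dp - dq ≠ 0 := by intro e; apply hh; linarith
        have := c8 hne
        linarith
      · refine ⟨ds + dp - dq, by rw [abs_le]; constructor <;> linarith, ?_, ?_⟩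
        · intro hh
          rw [h]
          exact c8 hh
        · intro hh
          exact absurd (by ring) hh
    have := H ds dp dq dr du dv (by rw [abs_le]; exact b1) (by rw [abs_le]; exact b2)
      (by rw [abs_le]; exact b3) (by rw [abs_le]; exact b4) hdub hdvb
      c1 c2 c3 c4 c5 c6 hdu1 hdu2 hdv1 hdv2
    exact ⟨this.1, this.2.1, this.2.2.1, this.2.2.2.1⟩
  -- r at a bound
  have step3 : r = 0 ∨ r = m1 ∨ s + r = m1 := by
    by_contra hc
    push_neg at hc
    obtain ⟨n1, n2, n3⟩ := hc
    have := key 0 0 0 1 (by norm_num) (by norm_num) (by norm_num) (by norm_num)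
      (by intro hh; exact absurd (by norm_num) hh)
      (by intro hh; exact absurd (by norm_num) hh)
      (fun _ => ⟨lt_of_le_of_ne hr0 (Ne.symm n1), lt_of_le_of_ne hr1 n2⟩)
      (by intro hh; exact absurd (by norm_num) hh)
      (by intro hh; exact absurd (by norm_num) hh)
      (fun _ => lt_of_le_of_ne hsr n3)
      (by intro hh; exact absurd (by norm_num) hh)
      (by intro hh; exact absurd (by norm_num) hh)
    exact absurd this.2.2.2 (by norm_num)
  have Ls : s + p = 0 ∨ s + q = 0 ∨ s + r = m1 := by
    by_contra hc
    push_neg at hc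
    obtain ⟨n1, n2, n3⟩ := hc
    have := key 1 0 0 0 (by norm_num) (by norm_num) (by norm_num) (by norm_num)
      (by intro hh; exact absurd (by norm_num) hh)
      (by intro hh; exact absurd (by norm_num) hh)
      (by intro hh; exact absurd (by norm_num) hh)
      (fun _ => lt_of_le_of_ne hsp (Ne.symm n1))
      (fun _ => lt_of_le_of_ne hsq (Ne.symm n2))
      (fun _ => lt_of_le_of_ne hsr n3)
      (fun _ => by
          rcases lt_or_eq_of_le (show (0:ℝ) ≤ ↑m2 + s + q - p by linarith) with h' | h'
          · exact h'
          · exact absurd (show s + q = 0 by linarith) n2)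
      (fun _ => by
          rcases lt_or_eq_of_le (show (0:ℝ) ≤ ↑m3 + s + p - q by linarith) with h' | h'
          · exact h'
          · exact absurd (show s + p = 0 by linarith) n1)
    exact absurd this.1 (by norm_num)
  have L5 : s + p = 0 → s + q = 0 → s + r = m1 → ∃ S : ℤ, s = S := by
    intro hB hC hA
    have dis : p = 0 ∨ p = m2 ∨ q = 0 ∨ q = m3 ∨ r = 0 ∨ r = m1 := by
      by_contra hc
      push_neg at hc
      obtain ⟨n1, n2, n3, n4, n5, n6⟩ := hc
      have := key 1 (-1) (-1) (-1) (by norm_num) (by norm_num) (by norm_num) (by norm_num)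
        (fun _ => ⟨lt_of_le_of_ne hp0 (Ne.symm n1), lt_of_le_of_ne hp1 n2⟩)
        (fun _ => ⟨lt_of_le_of_ne hq0 (Ne.symm n3), lt_of_le_of_ne hq1 n4⟩)
        (fun _ => ⟨lt_of_le_of_ne hr0 (Ne.symm n5), lt_of_le_of_ne hr1 n6⟩)
        (by intro hh; exact absurd (by norm_num) hh)
        (by intro hh; exact absurd (by norm_num) hh)
        (by intro hh; exact absurd (by norm_num) hh)
        (fun _ => by
            rcases lt_or_eq_of_le (show (0:ℝ) ≤ ↑m2 + s + q - p by linarith) with h' | h'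
            · exact h'
            · exact absurd (show p = (m2:ℝ) by linarith) n2)
        (fun _ => by
            rcases lt_or_eq_of_le (show (0:ℝ) ≤ ↑m3 + s + p - q by linarith) with h' | h'
            · exact h'
            · exact absurd (show q = (m3:ℝ) by linarith) n4)
      exact absurd this.1 (by norm_num)
    rcases dis with h | h | h | h | h | h
    · exact ⟨0, by push_cast; linarith⟩
    · exact ⟨-m2, by push_cast; linarith⟩
    · exact ⟨0, by push_cast; linarith⟩
    · exact ⟨-m3, by push_cast; linarith⟩
    · exact ⟨m1, by push_cast; linarith⟩
    · exact ⟨0, by push_cast; linarith⟩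
  have LBC : s + p = 0 → s + q = 0 → ∃ S : ℤ, s = S := by
    intro hB hC
    have dis : p = 0 ∨ p = m2 ∨ q = 0 ∨ q = m3 ∨ s + r = m1 := by
      by_contra hc
      push_neg at hc
      obtain ⟨n1, n2, n3, n4, n5⟩ := hc
      have := key 1 (-1) (-1) 0 (by norm_num) (by norm_num) (by norm_num) (by norm_num)
        (fun _ => ⟨lt_of_le_of_ne hp0 (Ne.symm n1), lt_of_le_of_ne hp1 n2⟩)
        (fun _ => ⟨lt_of_le_of_ne hq0 (Ne.symm n3), lt_of_le_of_ne hq1 n4⟩)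
        (by intro hh; exact absurd (by norm_num) hh)
        (by intro hh; exact absurd (by norm_num) hh)
        (by intro hh; exact absurd (by norm_num) hh)
        (fun _ => lt_of_le_of_ne hsr n5)
        (fun _ => by
            rcases lt_or_eq_of_le (show (0:ℝ) ≤ ↑m2 + s + q - p by linarith) with h' | h'
            · exact h'
            · exact absurd (show p = (m2:ℝ) by linarith) n2)
        (fun _ => by
            rcases lt_or_eq_of_le (show (0:ℝ) ≤ ↑m3 + s + p - q by linarith) with h' | h'
            · exact h'
            · exact absurd (show q = (m3:ℝ) by linarith) n4)
      exact absurd this.1 (by norm_num)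
    rcases dis with h | h | h | h | h
    · exact ⟨0, by push_cast; linarith⟩
    · exact ⟨-m2, by push_cast; linarith⟩
    · exact ⟨0, by push_cast; linarith⟩
    · exact ⟨-m3, by push_cast; linarith⟩
    · exact L5 hB hC h
  have LA : s + r = m1 → ∃ S : ℤ, s = S := by
    intro hA
    have dis1 : r = 0 ∨ r = m1 ∨ s + p = 0 ∨ s + q = 0 := by
      by_contra hc
      push_neg at hc
      obtain ⟨n1, n2, n3, n4⟩ := hc
      have := key 1 0 0 (-1) (by norm_num) (by norm_num) (by norm_num) (by norm_num)
        (by intro hh; exact absurd (by norm_num) hh)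
        (by intro hh; exact absurd (by norm_num) hh)
        (fun _ => ⟨lt_of_le_of_ne hr0 (Ne.symm n1), lt_of_le_of_ne hr1 n2⟩)
        (fun _ => lt_of_le_of_ne hsp (Ne.symm n3))
        (fun _ => lt_of_le_of_ne hsq (Ne.symm n4))
        (by intro hh; exact absurd (by norm_num) hh)
        (fun _ => by
            rcases lt_or_eq_of_le (show (0:ℝ) ≤ ↑m2 + s + q - p by linarith) with h' | h'
            · exact h'
            · exact absurd (show s + q = 0 by linarith) n4)
        (fun _ => by
            rcases lt_or_eq_of_le (show (0:ℝ) ≤ ↑m3 + s + p - q by linarith) with h' | h'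
            · exact h'
            · exact absurd (show s + p = 0 by linarith) n3)
      exact absurd this.1 (by norm_num)
    rcases dis1 with h | h | hB | hC
    · exact ⟨m1, by push_cast; linarith⟩
    · exact ⟨0, by push_cast; linarith⟩
    · have dis2 : p = 0 ∨ p = m2 ∨ r = 0 ∨ r = m1 ∨ s + q = 0 := by
        by_contra hc
        push_neg at hc
        obtain ⟨n1, n2, n3, n4, n5⟩ := hc
        have := key 1 (-1) 0 (-1) (by norm_num) (by norm_num) (by norm_num) (by norm_num)
          (fun _ => ⟨lt_of_le_of_ne hp0 (Ne.symm n1), lt_of_le_of_ne hp1 n2⟩)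
          (by intro hh; exact absurd (by norm_num) hh)
          (fun _ => ⟨lt_of_le_of_ne hr0 (Ne.symm n3), lt_of_le_of_ne hr1 n4⟩)
          (by intro hh; exact absurd (by norm_num) hh)
          (fun _ => lt_of_le_of_ne hsq (Ne.symm n5))
          (by intro hh; exact absurd (by norm_num) hh)
          (fun _ => by
              rcases lt_or_eq_of_le (show (0:ℝ) ≤ ↑m2 + s + q - p by linarith) with h' | h'
              · exact h'
              · exact absurd (show p = (m2:ℝ) by linarith) n2)
          (by intro hh; exact absurd (by norm_num) hh)
        exact absurd this.1 (by norm_num)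
      rcases dis2 with h | h | h | h | hC
      · exact ⟨0, by push_cast; linarith⟩
      · exact ⟨-m2, by push_cast; linarith⟩
      · exact ⟨m1, by push_cast; linarith⟩
      · exact ⟨0, by push_cast; linarith⟩
      · exact L5 hB hC hA
    · have dis3 : q = 0 ∨ q = m3 ∨ r = 0 ∨ r = m1 ∨ s + p = 0 := by
        by_contra hc
        push_neg at hc
        obtain ⟨n1, n2, n3, n4, n5⟩ := hc
        have := key 1 0 (-1) (-1) (by norm_num) (by norm_num) (by norm_num) (by norm_num)
          (by intro hh; exact absurd (by norm_num) hh)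
          (fun _ => ⟨lt_of_le_of_ne hq0 (Ne.symm n1), lt_of_le_of_ne hq1 n2⟩)
          (fun _ => ⟨lt_of_le_of_ne hr0 (Ne.symm n3), lt_of_le_of_ne hr1 n4⟩)
          (fun _ => lt_of_le_of_ne hsp (Ne.symm n5))
          (by intro hh; exact absurd (by norm_num) hh)
          (by intro hh; exact absurd (by norm_num) hh)
          (by intro hh; exact absurd (by norm_num) hh)
          (fun _ => by
              rcases lt_or_eq_of_le (show (0:ℝ) ≤ ↑m3 + s + p - q by linarith) with h' | h'
              · exact h'
              · exact absurd (show q = (m3:ℝ) by linarith) n2)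
        exact absurd this.1 (by norm_num)
      rcases dis3 with h | h | h | h | hB
      · exact ⟨0, by push_cast; linarith⟩
      · exact ⟨-m3, by push_cast; linarith⟩
      · exact ⟨m1, by push_cast; linarith⟩
      · exact ⟨0, by push_cast; linarith⟩
      · exact L5 hB hC hA
  have LB : s + p = 0 → ∃ S : ℤ, s = S := by
    intro hB
    have dis : p = 0 ∨ p = m2 ∨ s + q = 0 ∨ s + r = m1 := by
      by_contra hc
      push_neg at hc
      obtain ⟨n1, n2, n3, n4⟩ := hc
      have := key 1 (-1) 0 0 (by norm_num) (by norm_num) (by norm_num) (by norm_num)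
        (fun _ => ⟨lt_of_le_of_ne hp0 (Ne.symm n1), lt_of_le_of_ne hp1 n2⟩)
        (by intro hh; exact absurd (by norm_num) hh)
        (by intro hh; exact absurd (by norm_num) hh)
        (by intro hh; exact absurd (by norm_num) hh)
        (fun _ => lt_of_le_of_ne hsq (Ne.symm n3))
        (fun _ => lt_of_le_of_ne hsr n4)
        (fun _ => by
            rcases lt_or_eq_of_le (show (0:ℝ) ≤ ↑m2 + s + q - p by linarith) with h' | h'
            · exact h'
            · exact absurd (show p = (m2:ℝ) by linarith) n2)
        (by intro hh; exact absurd (by norm_num) hh)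
      exact absurd this.1 (by norm_num)
    rcases dis with h | h | h | h
    · exact ⟨0, by push_cast; linarith⟩
    · exact ⟨-m2, by push_cast; linarith⟩
    · exact LBC hB h
    · exact LA h
  have LC : s + q = 0 → ∃ S : ℤ, s = S := by
    intro hC
    have dis : q = 0 ∨ q = m3 ∨ s + p = 0 ∨ s + r = m1 := by
      by_contra hc
      push_neg at hc
      obtain ⟨n1, n2, n3, n4⟩ := hc
      have := key 1 0 (-1) 0 (by norm_num) (by norm_num) (by norm_num) (by norm_num)
        (by intro hh; exact absurd (by norm_num) hh)
        (fun _ => ⟨lt_of_le_of_ne hq0 (Ne.symm n1), lt_of_le_of_ne hq1 n2⟩)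
        (by intro hh; exact absurd (by norm_num) hh)
        (fun _ => lt_of_le_of_ne hsp (Ne.symm n3))
        (by intro hh; exact absurd (by norm_num) hh)
        (fun _ => lt_of_le_of_ne hsr n4)
        (by intro hh; exact absurd (by norm_num) hh)
        (fun _ => by
            rcases lt_or_eq_of_le (show (0:ℝ) ≤ ↑m3 + s + p - q by linarith) with h' | h'
            · exact h'
            · exact absurd (show q = (m3:ℝ) by linarith) n2)
      exact absurd this.1 (by norm_num)
    rcases dis with h | h | h | h
    · exact ⟨0, by push_cast; linarith⟩
    · exact ⟨-m3, by push_cast; linarith⟩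
    · exact LBC h hC
    · exact LA h
  obtain ⟨S, hS⟩ : ∃ S : ℤ, s = S := by
    rcases Ls with h | h | h
    · exact LB h
    · exact LC h
    · exact LA h
  obtain ⟨P, hP⟩ : ∃ P : ℤ, p = P := by
    have dis : p = 0 ∨ p = m2 ∨ s + p = 0 := by
      by_contra hc
      push_neg at hc
      obtain ⟨n1, n2, n3⟩ := hc
      have := key 0 1 0 0 (by norm_num) (by norm_num) (by norm_num) (by norm_num)
        (fun _ => ⟨lt_of_le_of_ne hp0 (Ne.symm n1), lt_of_le_of_ne hp1 n2⟩)
        (by intro hh; exact absurd (by norm_num) hh)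
        (by intro hh; exact absurd (by norm_num) hh)
        (fun _ => lt_of_le_of_ne hsp (Ne.symm n3))
        (by intro hh; exact absurd (by norm_num) hh)
        (by intro hh; exact absurd (by norm_num) hh)
        (fun _ => by
            rcases lt_or_eq_of_le (show (0:ℝ) ≤ ↑m2 + s + q - p by linarith) with h' | h'
            · exact h'
            · exact absurd (show p = (m2:ℝ) by linarith) n2)
        (fun _ => by
            rcases lt_or_eq_of_le (show (0:ℝ) ≤ ↑m3 + s + p - q by linarith) with h' | h'
            · exact h'
            · exact absurd (show s + p = 0 by linarith) n3)
      exact absurd this.2.1 (by norm_num)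
    rcases dis with h | h | h
    · exact ⟨0, by push_cast; linarith⟩
    · exact ⟨m2, by push_cast; linarith⟩
    · exact ⟨-S, by push_cast; linarith⟩
  obtain ⟨Q, hQ⟩ : ∃ Q : ℤ, q = Q := by
    have dis : q = 0 ∨ q = m3 ∨ s + q = 0 := by
      by_contra hc
      push_neg at hc
      obtain ⟨n1, n2, n3⟩ := hc
      have := key 0 0 1 0 (by norm_num) (by norm_num) (by norm_num) (by norm_num)
        (by intro hh; exact absurd (by norm_num) hh)
        (fun _ => ⟨lt_of_le_of_ne hq0 (Ne.symm n1), lt_of_le_of_ne hq1 n2⟩)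
        (by intro hh; exact absurd (by norm_num) hh)
        (by intro hh; exact absurd (by norm_num) hh)
        (fun _ => lt_of_le_of_ne hsq (Ne.symm n3))
        (by intro hh; exact absurd (by norm_num) hh)
        (fun _ => by
            rcases lt_or_eq_of_le (show (0:ℝ) ≤ ↑m2 + s + q - p by linarith) with h' | h'
            · exact h'
            · exact absurd (show s + q = 0 by linarith) n3)
        (fun _ => by
            rcases lt_or_eq_of_le (show (0:ℝ) ≤ ↑m3 + s + p - q by linarith) with h' | h'
            · exact h'
            · exact absurd (show q = (m3:ℝ) by linarith) n2)
      exact absurd this.2.2.1 (by norm_num)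
    rcases dis with h | h | h
    · exact ⟨0, by push_cast; linarith⟩
    · exact ⟨m3, by push_cast; linarith⟩
    · exact ⟨-S, by push_cast; linarith⟩
  obtain ⟨R, hR⟩ : ∃ R : ℤ, r = R := by
    rcases step3 with h | h | h
    · exact ⟨0, by push_cast; linarith⟩
    · exact ⟨m1, by push_cast; linarith⟩
    · exact ⟨m1 - S, by push_cast; linarith⟩
  obtain ⟨U, hU⟩ : ∃ U : ℤ, u = U := by
    rcases step1 with h | h
    · exact ⟨0, by push_cast; linarith⟩
    · exact ⟨m2 + S + Q - P, by push_cast; linarith⟩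
  obtain ⟨V, hV⟩ : ∃ V : ℤ, v = V := by
    rcases step2 with h | h
    · exact ⟨0, by push_cast; linarith⟩
    · exact ⟨m3 + S + P - Q, by push_cast; linarith⟩
  exact ⟨S, P, Q, R, U, V, hS, hP, hQ, hR, hU, hV⟩


/-- For arbitrary nonnegative integers `m_1, m_2, m_3`, the standard `D₃` string
polytope `Q₃(m) ⊆ ℝ⁶` is a lattice polytope: every vertex lies in `ℤ⁶`. -/
theorem statement15 (m : ℕ → ℕ) :
    ∀ a ∈ (QPoly 3 m).extremePoints ℝ, ∀ p : SIdx 3, ∃ k : ℤ, a p = k := by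
  intro a ha
  obtain ⟨hmem, hext⟩ := mem_extremePoints.mp ha
  obtain ⟨H1, H2, H3, H4, H5, H6, H7, H8, H9, H10, H11, H12, H13⟩ := (mem_iff m a).mp hmem
  classical
  have Hcore : ∀ ds dp dq dr du dv : ℝ, |ds| ≤ 1 → |dp| ≤ 1 → |dq| ≤ 1 → |dr| ≤ 1 →
      |du| ≤ 3 → |dv| ≤ 3 →
      (dp ≠ 0 → 0 < a e12 - a e14 ∧ a e12 - a e14 < (m 2 : ℝ)) →
      (dq ≠ 0 → 0 < a e13 - a e14 ∧ a e13 - a e14 < (m 3 : ℝ)) →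
      (dr ≠ 0 → 0 < a e14 ∧ a e14 < (m 1 : ℝ)) →
      (ds + dp ≠ 0 → 0 < (a e11 - a e12 - a e13 + a e14) + (a e12 - a e14)) →
      (ds + dq ≠ 0 → 0 < (a e11 - a e12 - a e13 + a e14) + (a e13 - a e14)) →
      (ds + dr ≠ 0 → (a e11 - a e12 - a e13 + a e14) + a e14 < (m 1 : ℝ)) →
      (du ≠ 0 → 0 < a e22) →
      (du - ds - dq + dp ≠ 0 →
        a e22 < (m 2 : ℝ) + (a e11 - a e12 - a e13 + a e14) + (a e13 - a e14) - (a e12 - a e14)) →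
      (dv ≠ 0 → 0 < a e23) →
      (dv - ds - dp + dq ≠ 0 →
        a e23 < (m 3 : ℝ) + (a e11 - a e12 - a e13 + a e14) + (a e12 - a e14) - (a e13 - a e14)) →
      ds = 0 ∧ dp = 0 ∧ dq = 0 ∧ dr = 0 ∧ du = 0 ∧ dv = 0 := by
    intro ds dp dq dr du dv b1 b2 b3 b4 b5 b6 c1 c2 c3 c4 c5 c6 c7 c8 c9 c10
    by_contra hcon
    rw [abs_le] at b1 b2 b3 b4 b5 b6
    set σ1 : ℝ := (if ds + dq = 0 then (1:ℝ) else a e11 - a e12) with hdσ1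
    have hposσ1 : 0 < σ1 := by
      rw [hdσ1]
      split
      · norm_num
      · next h => linarith [c5 h]
    set σ2 : ℝ := (if ds + dp = 0 then (1:ℝ) else a e11 - a e13) with hdσ2
    have hposσ2 : 0 < σ2 := by
      rw [hdσ2]
      split
      · norm_num
      · next h => linarith [c4 h]
    set σ3 : ℝ := (if dp = 0 then (1:ℝ) else min (a e12 - a e14) ((m 2 : ℝ) - (a e12 - a e14))) with hdσ3
    have hposσ3 : 0 < σ3 := by
      rw [hdσ3]
      split
      · norm_num
      · next h => obtain ⟨u1, u2⟩ := c1 h; exact lt_min u1 (by linarith)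
    set σ4 : ℝ := (if dq = 0 then (1:ℝ) else min (a e13 - a e14) ((m 3 : ℝ) - (a e13 - a e14))) with hdσ4
    have hposσ4 : 0 < σ4 := by
      rw [hdσ4]
      split
      · norm_num
      · next h => obtain ⟨u1, u2⟩ := c2 h; exact lt_min u1 (by linarith)
    set σ5 : ℝ := (if dr = 0 then (1:ℝ) else min (a e14) ((m 1 : ℝ) - a e14)) with hdσ5
    have hposσ5 : 0 < σ5 := by
      rw [hdσ5]
      split
      · norm_num
      · next h => obtain ⟨u1, u2⟩ := c3 h; exact lt_min u1 (by linarith)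
    set σ6 : ℝ := (if du = 0 then (1:ℝ) else a e22) with hdσ6
    have hposσ6 : 0 < σ6 := by
      rw [hdσ6]
      split
      · norm_num
      · next h => exact c7 h
    set σ7 : ℝ := (if dv = 0 then (1:ℝ) else a e23) with hdσ7
    have hposσ7 : 0 < σ7 := by
      rw [hdσ7]
      split
      · norm_num
      · next h => exact c9 h
    set σ8 : ℝ := (if ds + dr = 0 then (1:ℝ) else (m 1 : ℝ) - (a e11 - a e12 - a e13 + 2*a e14)) with hdσ8
    have hposσ8 : 0 < σ8 := by
      rw [hdσ8]
      split
      · norm_num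
      · next h => linarith [c6 h]
    set σ9 : ℝ := (if du - ds - dq + dp = 0 then (1:ℝ) else (m 2 : ℝ) + a e11 - 2*a e12 + a e14 - a e22) with hdσ9
    have hposσ9 : 0 < σ9 := by
      rw [hdσ9]
      split
      · norm_num
      · next h => linarith [c8 h]
    set σ10 : ℝ := (if dv - ds - dp + dq = 0 then (1:ℝ) else (m 3 : ℝ) + a e11 - 2*a e13 + a e14 - a e23) with hdσ10
    have hposσ10 : 0 < σ10 := by
      rw [hdσ10]
      split
      · norm_num
      · next h => linarith [c10 h]
    set σ : ℝ := min σ1 (min σ2 (min σ3 (min σ4 (min σ5 (min σ6 (min σ7 (min σ8 (min σ9 σ10)))))))) with hdσ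
    have hσ : 0 < σ := by
      rw [hdσ]
      exact lt_min hposσ1 (lt_min hposσ2 (lt_min hposσ3 (lt_min hposσ4 (lt_min hposσ5
        (lt_min hposσ6 (lt_min hposσ7 (lt_min hposσ8 (lt_min hposσ9 hposσ10))))))))
    set ε : ℝ := σ/8 with hdε
    have hε : 0 < ε := by rw [hdε]; linarith
    have hεσ : 8*ε = σ := by rw [hdε]; ring
    have l1 : σ ≤ σ1 := min_le_left _ _
    have r1 : σ ≤ min σ2 (min σ3 (min σ4 (min σ5 (min σ6 (min σ7 (min σ8 (min σ9 σ10))))))) := min_le_right _ _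
    have l2 : σ ≤ σ2 := le_trans r1 (min_le_left _ _)
    have r2 : σ ≤ min σ3 (min σ4 (min σ5 (min σ6 (min σ7 (min σ8 (min σ9 (σ10))))))) := le_trans r1 (min_le_right _ _)
    have l3 : σ ≤ σ3 := le_trans r2 (min_le_left _ _)
    have r3 : σ ≤ min σ4 (min σ5 (min σ6 (min σ7 (min σ8 (min σ9 (σ10)))))) := le_trans r2 (min_le_right _ _)
    have l4 : σ ≤ σ4 := le_trans r3 (min_le_left _ _)
    have r4 : σ ≤ min σ5 (min σ6 (min σ7 (min σ8 (min σ9 (σ10))))) := le_trans r3 (min_le_right _ _)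
    have l5 : σ ≤ σ5 := le_trans r4 (min_le_left _ _)
    have r5 : σ ≤ min σ6 (min σ7 (min σ8 (min σ9 (σ10)))) := le_trans r4 (min_le_right _ _)
    have l6 : σ ≤ σ6 := le_trans r5 (min_le_left _ _)
    have r6 : σ ≤ min σ7 (min σ8 (min σ9 (σ10))) := le_trans r5 (min_le_right _ _)
    have l7 : σ ≤ σ7 := le_trans r6 (min_le_left _ _)
    have r7 : σ ≤ min σ8 (min σ9 (σ10)) := le_trans r6 (min_le_right _ _)
    have l8 : σ ≤ σ8 := le_trans r7 (min_le_left _ _)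
    have r8 : σ ≤ min σ9 (σ10) := le_trans r7 (min_le_right _ _)
    have l9 : σ ≤ σ9 := le_trans r8 (min_le_left _ _)
    have r9 : σ ≤ σ10 := le_trans r8 (min_le_right _ _)
    have l10 : σ ≤ σ10 := r9
    have D1 : ds + dq = 0 ∨ 8*ε ≤ a e11 - a e12 := by
      by_cases h : ds + dq = 0
      · exact Or.inl h
      · right
        have hb := l1
        rw [hdσ1, if_neg h] at hb
        linarith
    have D2 : ds + dp = 0 ∨ 8*ε ≤ a e11 - a e13 := by
      by_cases h : ds + dp = 0
      · exact Or.inl h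
      · right
        have hb := l2
        rw [hdσ2, if_neg h] at hb
        linarith
    have D3 : dp = 0 ∨ (8*ε ≤ a e12 - a e14 ∧ 8*ε ≤ (m 2 : ℝ) - (a e12 - a e14)) := by
      by_cases h : dp = 0
      · exact Or.inl h
      · right
        have hb := l3
        rw [hdσ3, if_neg h] at hb
        constructor
        · linarith [hb.trans (min_le_left _ _)]
        · linarith [hb.trans (min_le_right _ _)]
    have D4 : dq = 0 ∨ (8*ε ≤ a e13 - a e14 ∧ 8*ε ≤ (m 3 : ℝ) - (a e13 - a e14)) := by
      by_cases h : dq = 0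
      · exact Or.inl h
      · right
        have hb := l4
        rw [hdσ4, if_neg h] at hb
        constructor
        · linarith [hb.trans (min_le_left _ _)]
        · linarith [hb.trans (min_le_right _ _)]
    have D5 : dr = 0 ∨ (8*ε ≤ a e14 ∧ 8*ε ≤ (m 1 : ℝ) - a e14) := by
      by_cases h : dr = 0
      · exact Or.inl h
      · right
        have hb := l5
        rw [hdσ5, if_neg h] at hb
        constructor
        · linarith [hb.trans (min_le_left _ _)]
        · linarith [hb.trans (min_le_right _ _)]
    have D6 : du = 0 ∨ 8*ε ≤ a e22 := by
      by_cases h : du = 0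
      · exact Or.inl h
      · right
        have hb := l6
        rw [hdσ6, if_neg h] at hb
        linarith
    have D7 : dv = 0 ∨ 8*ε ≤ a e23 := by
      by_cases h : dv = 0
      · exact Or.inl h
      · right
        have hb := l7
        rw [hdσ7, if_neg h] at hb
        linarith
    have D8 : ds + dr = 0 ∨ 8*ε ≤ (m 1 : ℝ) - (a e11 - a e12 - a e13 + 2*a e14) := by
      by_cases h : ds + dr = 0
      · exact Or.inl h
      · right
        have hb := l8
        rw [hdσ8, if_neg h] at hb
        linarith
    have D9 : du - ds - dq + dp = 0 ∨ 8*ε ≤ (m 2 : ℝ) + a e11 - 2*a e12 + a e14 - a e22 := by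
      by_cases h : du - ds - dq + dp = 0
      · exact Or.inl h
      · right
        have hb := l9
        rw [hdσ9, if_neg h] at hb
        linarith
    have D10 : dv - ds - dp + dq = 0 ∨ 8*ε ≤ (m 3 : ℝ) + a e11 - 2*a e13 + a e14 - a e23 := by
      by_cases h : dv - ds - dp + dq = 0
      · exact Or.inl h
      · right
        have hb := l10
        rw [hdσ10, if_neg h] at hb
        linarith
    have D1n : (-ds) + (-dq) = 0 ∨ 8*ε ≤ a e11 - a e12 := by
      rcases D1 with h | h
      · exact Or.inl (by linarith)
      · exact Or.inr h
    have D2n : (-ds) + (-dp) = 0 ∨ 8*ε ≤ a e11 - a e13 := by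
      rcases D2 with h | h
      · exact Or.inl (by linarith)
      · exact Or.inr h
    have D3n : (-dp) = 0 ∨ (8*ε ≤ a e12 - a e14 ∧ 8*ε ≤ (m 2 : ℝ) - (a e12 - a e14)) := by
      rcases D3 with h | h
      · exact Or.inl (by linarith)
      · exact Or.inr h
    have D4n : (-dq) = 0 ∨ (8*ε ≤ a e13 - a e14 ∧ 8*ε ≤ (m 3 : ℝ) - (a e13 - a e14)) := by
      rcases D4 with h | h
      · exact Or.inl (by linarith)
      · exact Or.inr h
    have D5n : (-dr) = 0 ∨ (8*ε ≤ a e14 ∧ 8*ε ≤ (m 1 : ℝ) - a e14) := by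
      rcases D5 with h | h
      · exact Or.inl (by linarith)
      · exact Or.inr h
    have D6n : (-du) = 0 ∨ 8*ε ≤ a e22 := by
      rcases D6 with h | h
      · exact Or.inl (by linarith)
      · exact Or.inr h
    have D7n : (-dv) = 0 ∨ 8*ε ≤ a e23 := by
      rcases D7 with h | h
      · exact Or.inl (by linarith)
      · exact Or.inr h
    have D8n : (-ds) + (-dr) = 0 ∨ 8*ε ≤ (m 1 : ℝ) - (a e11 - a e12 - a e13 + 2*a e14) := by
      rcases D8 with h | h
      · exact Or.inl (by linarith)
      · exact Or.inr h
    have D9n : (-du) - (-ds) - (-dq) + (-dp) = 0 ∨ 8*ε ≤ (m 2 : ℝ) + a e11 - 2*a e12 + a e14 - a e22 := by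
      rcases D9 with h | h
      · exact Or.inl (by linarith)
      · exact Or.inr h
    have D10n : (-dv) - (-ds) - (-dp) + (-dq) = 0 ∨ 8*ε ≤ (m 3 : ℝ) + a e11 - 2*a e13 + a e14 - a e23 := by
      rcases D10 with h | h
      · exact Or.inl (by linarith)
      · exact Or.inr h
    have hplus := perturb_mem m a hmem ε ds dp dq dr du dv hε b1.1 b1.2 b2.1 b2.2
      b3.1 b3.2 b4.1 b4.2 b5.1 b5.2 b6.1 b6.2 D1 D2 D3 D4 D5 D6 D7 D8 D9 D10
    have hminus := perturb_mem m a hmem ε (-ds) (-dp) (-dq) (-dr) (-du) (-dv) hε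
      (by linarith) (by linarith) (by linarith) (by linarith) (by linarith) (by linarith)
      (by linarith) (by linarith) (by linarith) (by linarith) (by linarith) (by linarith)
      D1n D2n D3n D4n D5n D6n D7n D8n D9n D10n
    obtain ⟨heqm, heqp⟩ := hext _ hminus _ hplus ⟨1/2, 1/2, by norm_num, by norm_num,
      by norm_num, by
        funext z
        rcases SIdx3_cases z with rfl | rfl | rfl | rfl | rfl | rfl <;>
          simp only [Pi.add_apply, Pi.smul_apply, pt11, pt12, pt13, pt14, pt22, pt23,
            smul_eq_mul] <;> ring⟩
    have z1 := congrFun heqp e11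
    have z2 := congrFun heqp e12
    have z3 := congrFun heqp e13
    have z4 := congrFun heqp e14
    have z5 := congrFun heqp e22
    have z6 := congrFun heqp e23
    rw [pt11] at z1
    rw [pt12] at z2
    rw [pt13] at z3
    rw [pt14] at z4
    rw [pt22] at z5
    rw [pt23] at z6
    have hdr : dr = 0 := by
      rcases mul_eq_zero.mp (show ε * dr = 0 by linarith) with h | h
      · exact absurd h (ne_of_gt hε)
      · exact h
    have hdu : du = 0 := by
      rcases mul_eq_zero.mp (show ε * du = 0 by linarith) with h | h
      · exact absurd h (ne_of_gt hε)
      · exact h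
    have hdv : dv = 0 := by
      rcases mul_eq_zero.mp (show ε * dv = 0 by linarith) with h | h
      · exact absurd h (ne_of_gt hε)
      · exact h
    have hdp : dp = 0 := by
      have h2 : ε * (dp + dr) = 0 := by linarith
      rcases mul_eq_zero.mp h2 with h | h
      · exact absurd h (ne_of_gt hε)
      · linarith
    have hdq : dq = 0 := by
      have h3 : ε * (dq + dr) = 0 := by linarith
      rcases mul_eq_zero.mp h3 with h | h
      · exact absurd h (ne_of_gt hε)
      · linarith
    have hds : ds = 0 := by
      have h1 : ε * (ds + dp + dq + dr) = 0 := by linarith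
      rcases mul_eq_zero.mp h1 with h | h
      · exact absurd h (ne_of_gt hε)
      · linarith
    exact hcon ⟨hds, hdp, hdq, hdr, hdu, hdv⟩
  obtain ⟨S, P, Q, R, U, V, hS, hP, hQ, hR, hU, hV⟩ :=
    core (m 1) (m 2) (m 3) (a e11 - a e12 - a e13 + a e14) (a e12 - a e14) (a e13 - a e14)
      (a e14) (a e22) (a e23) (by linarith) (by linarith) (by linarith) (by linarith)
      (by linarith) (by linarith) (by linarith) (by linarith) (by linarith) (by linarith)
      (by linarith) (by linarith) (by linarith) Hcore
  intro pp
  rcases SIdx3_cases pp with rfl | rfl | rfl | rfl | rfl | rfl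
  · exact ⟨S + P + Q + R, by push_cast; linarith⟩
  · exact ⟨P + R, by push_cast; linarith⟩
  · exact ⟨Q + R, by push_cast; linarith⟩
  · exact ⟨R, by linarith⟩
  · exact ⟨U, by linarith⟩
  · exact ⟨V, by linarith⟩
end
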